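/- arXiv:2009.04992 — 7 statements merged into one kernel-verified Lean document; each statement's English description precedes it below -/
import Mathlib

section
/- Let n ≥ 1 and let H be the unweighted hypergraph on the 2n vertices v_1, …, v_{2n} whose hyperedges are e_i = {v_i, v_{n+1}, v_{n+2}, …, v_{2n}} for i = 1, …, n (each of weight 1). Then for every ε ∈ (0,1), every (1±ε)-approximate cut sparsifier Ĥ = (V, Ê, ŵ) of H satisfies Ê = E; that is, the sparsifier must contain all n hyperedges. -/
open Finset
open scoped Classical

/-- A hyperedge `e` crosses the cut `S` if it has at least one vertex in `S` and at least
one vertex outside `S`. -/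
def hCrosses {V E : Type} (he : E → Finset V) (S : Finset V) (e : E) : Prop :=
  ((he e) ∩ S).Nonempty ∧ ((he e) \ S).Nonempty

/-- The weight of the cut `S` in the weighted hypergraph `(V, E, w)`. -/
noncomputable def hCutWt {V E : Type} [Fintype E] (he : E → Finset V) (w : E → ℝ)
    (S : Finset V) : ℝ :=
  ∑ e : E, if hCrosses he S e then w e else 0

/-! A sparsifier must keep every hyperedge that is the only one crossing some cut: removing it
sends that cut's weight to `0`, an error of relative size `1 > ε`. The singleton cut `{v_i}` of
the sunflower is crossed by `e_i` alone. -/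

section Crossing

variable {V E : Type} {he : E → Finset V} {S : Finset V} {e : E}

theorem hCrosses.nonempty (h : hCrosses he S e) : S.Nonempty :=
  let ⟨v, hv⟩ := h.1
  ⟨v, (mem_inter.1 hv).2⟩

theorem hCrosses.ne_univ [Fintype V] (h : hCrosses he S e) : S ≠ univ := by
  rintro rfl
  obtain ⟨v, hv⟩ := h.2
  exact (mem_sdiff.1 hv).2 (mem_univ v)

end Crossing

theorem hCutWt_eq_of_hCrosses_iff {V E : Type} [Fintype E] {he : E → Finset V} (w : E → ℝ)
    {S : Finset V} {i : E} (hS : ∀ e, hCrosses he S e ↔ e = i) :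
    hCutWt he w S = w i := by
  simp [hCutWt, hS]

theorem mem_of_approx_of_hCrosses_iff {V E : Type} [Fintype E] {he : E → Finset V}
    {w : E → ℝ} {Ehat : Finset E} {what : E → ℝ} {ε : ℝ} (hε1 : ε < 1)
    {S : Finset V} {i : E} (hS : ∀ e, hCrosses he S e ↔ e = i) (hwi : 0 < w i)
    (happrox : |(∑ e ∈ Ehat, if hCrosses he S e then what e else 0) - hCutWt he w S|
      ≤ ε * hCutWt he w S) :
    i ∈ Ehat := by
  by_contra hi
  have hsum : (∑ e ∈ Ehat, if hCrosses he S e then what e else 0) = 0 :=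
    sum_eq_zero fun e he' => if_neg fun hc => hi ((hS e).1 hc ▸ he')
  rw [hsum, hCutWt_eq_of_hCrosses_iff w hS, zero_sub, abs_neg, abs_of_pos hwi] at happrox
  exact (mul_lt_of_lt_one_left hwi hε1).not_ge happrox

def sunflowerEdge (n : ℕ) (i : Fin n) : Finset (Fin (2 * n)) :=
  univ.filter fun v => v.val = i.val ∨ n ≤ v.val

theorem sunflowerEdge_hCrosses_singleton_iff {n : ℕ} (i e : Fin n) :
    hCrosses (sunflowerEdge n) {Fin.castLE (by omega) i} e ↔ e = i := by
  have hi := i.isLt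
  constructor
  · rintro ⟨⟨v, hv⟩, -⟩
    simp only [sunflowerEdge, mem_inter, mem_filter, mem_univ, true_and, mem_singleton] at hv
    obtain ⟨hv, rfl⟩ := hv
    simp only [Fin.val_castLE] at hv
    exact Fin.ext (by omega)
  · rintro rfl
    refine ⟨⟨Fin.castLE (by omega) e, by simp [sunflowerEdge]⟩, ⟨⟨n, by omega⟩, ?_⟩⟩
    simp [sunflowerEdge, Fin.ext_iff]
    omega

theorem stmt1_general (n : ℕ)
    (he : Fin n → Finset (Fin (2 * n)))
    (hhe : ∀ i : Fin n, he i =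
      Finset.univ.filter (fun v : Fin (2 * n) => v.val = i.val ∨ n ≤ v.val))
    (ε : ℝ) (hε1 : ε < 1)
    (Ehat : Finset (Fin n)) (what : Fin n → ℝ)
    (hsp : ∀ S : Finset (Fin (2 * n)), S.Nonempty → S ≠ Finset.univ →
      |(∑ e ∈ Ehat, if hCrosses he S e then what e else 0) -
          hCutWt he (fun _ => (1 : ℝ)) S|
        ≤ ε * hCutWt he (fun _ => (1 : ℝ)) S) :
    Ehat = Finset.univ := by
  obtain rfl : he = sunflowerEdge n := funext hhe
  refine eq_univ_iff_forall.2 fun i => ?_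
  have hS := sunflowerEdge_hCrosses_singleton_iff i
  have hcross := (hS i).2 rfl
  exact mem_of_approx_of_hCrosses_iff hε1 hS one_pos (hsp _ hcross.nonempty hcross.ne_univ)

/-- The sunflower hypergraph on `2n` vertices `v_0, …, v_{2n-1}` with the `n`
unit-weight hyperedges `e_i = {v_i} ∪ {v_n, …, v_{2n-1}}`, `i = 0, …, n-1`: every
`(1 ± ε)`-approximate cut sparsifier of it (for `ε ∈ (0,1)`) must contain all `n` hyperedges. -/
theorem stmt1 (n : ℕ) (hn : 1 ≤ n)
    (he : Fin n → Finset (Fin (2 * n)))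
    (hhe : ∀ i : Fin n, he i =
      Finset.univ.filter (fun v : Fin (2 * n) => v.val = i.val ∨ n ≤ v.val))
    (ε : ℝ) (hε0 : 0 < ε) (hε1 : ε < 1)
    (Ehat : Finset (Fin n)) (what : Fin n → ℝ) (hwhat : ∀ e, 0 ≤ what e)
    (hsp : ∀ S : Finset (Fin (2 * n)), S.Nonempty → S ≠ Finset.univ →
      |(∑ e ∈ Ehat, if hCrosses he S e then what e else 0) -
          hCutWt he (fun _ => (1 : ℝ)) S|
        ≤ ε * hCutWt he (fun _ => (1 : ℝ)) S) :
    Ehat = Finset.univ :=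
  stmt1_general n he hhe ε hε1 Ehat what hsp
end

section
/- For every unweighted finite multi-hypergraph H = (V, E) in which every hyperedge has at least 2 vertices, there exists a 1-balanced weight assignment w^F : F → ℝ_{≥0}; that is, an assignment with Σ_{f ∈ F_e} w^F(f) = 1 for every e ∈ E such that all positive-weight edges of the clique F_e have strength exactly κ_e in G = (V, F, w^F). -/
open Finset
open scoped Classical

/-- An edge `f` crosses the cut `S` if exactly one of its endpoints lies in `S`. -/
def crossesCut {V F : Type} (ep : F → V × V) (S : Finset V) (f : F) : Prop :=
  ((ep f).1 ∈ S ∧ (ep f).2 ∉ S) ∨ ((ep f).1 ∉ S ∧ (ep f).2 ∈ S)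

/-- Total weight of edges of the induced subgraph `G[X]` crossing the cut `S`. -/
noncomputable def cutWt {V F : Type} [Fintype F] (ep : F → V × V) (w : F → ℝ)
    (X S : Finset V) : ℝ :=
  ∑ f : F, if (ep f).1 ∈ X ∧ (ep f).2 ∈ X ∧ crossesCut ep S f then w f else 0

/-- The min-cut of the induced subgraph `G[X]`: the least total weight of edges of `G[X]`
crossing a cut `(S, X \ S)` with `∅ ⊊ S ⊊ X`. -/
noncomputable def minCutIn {V F : Type} [Fintype F] (ep : F → V × V) (w : F → ℝ)
    (X : Finset V) : ℝ :=
  sInf {c : ℝ | ∃ S : Finset V, S ⊆ X ∧ S.Nonempty ∧ S ≠ X ∧ c = cutWt ep w X S}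

/-- The strength of an edge `f`: the maximum of the min-cut of `G[X]` over all vertex
sets `X` containing both endpoints of `f`. -/
noncomputable def strength {V F : Type} [Fintype V] [Fintype F] (ep : F → V × V)
    (w : F → ℝ) (f : F) : ℝ :=
  sSup {c : ℝ | ∃ X : Finset V, (ep f).1 ∈ X ∧ (ep f).2 ∈ X ∧ c = minCutIn ep w X}

/-- The (multiset) union over the hyperedges `e` of the edge set `F_e` of the clique on the
vertex set of `e`: an element records the hyperedge `e` and an unordered pair of distinct
vertices of `e` (normalized so that the first vertex is smaller). -/
abbrev CliqueEdges {V E : Type} [LinearOrder V] (he : E → Finset V) : Type :=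
  {p : E × V × V // p.2.1 ∈ he p.1 ∧ p.2.2 ∈ he p.1 ∧ p.2.1 < p.2.2}

/-- The endpoints of a clique edge. -/
def cep {V E : Type} [LinearOrder V] (he : E → Finset V) : CliqueEdges he → V × V :=
  fun f => f.1.2

/-- `κ_e`: the minimum strength of an edge of the clique `F_e` in the auxiliary graph
`G = (V, F, w)`. -/
noncomputable def kappa {V E : Type} [Fintype V] [LinearOrder V] [Fintype E]
    (he : E → Finset V) (w : CliqueEdges he → ℝ) (e : E) : ℝ :=
  sInf {c : ℝ | ∃ f : CliqueEdges he, f.1.1 = e ∧ c = strength (cep he) w f}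

/-- `κ_e^max`: the maximum strength of a positive-weight edge of the clique `F_e` in the
auxiliary graph `G = (V, F, w)`. -/
noncomputable def kappaMax {V E : Type} [Fintype V] [LinearOrder V] [Fintype E]
    (he : E → Finset V) (w : CliqueEdges he → ℝ) (e : E) : ℝ :=
  sSup {c : ℝ | ∃ f : CliqueEdges he, f.1.1 = e ∧ 0 < w f ∧ c = strength (cep he) w f}

/-- A weight assignment `w : F → ℝ≥0` is `γ`-balanced if for each hyperedge `e` the weights of
the clique `F_e` sum to `1` and `κ_e^max ≤ γ·κ_e`. -/
def BalancedAssignment {V E : Type} [Fintype V] [LinearOrder V] [Fintype E]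
    (he : E → Finset V) (w : CliqueEdges he → ℝ) (γ : ℝ) : Prop :=
  ∀ e : E, (∑ f : CliqueEdges he, if f.1.1 = e then w f else 0) = 1 ∧
    kappaMax he w e ≤ γ * kappa he w e

/-!
For `λ > 0` minimize the potential `Φ_λ(w) = ∑_g w_g exp (λ k_g(w))` over the compact set of
weightings whose clique weights sum to `1`; strengths are `1`-Lipschitz for the `ℓ¹` distance, so
`Φ_λ` is continuous. Moving a small weight `δ` from a positive-weight edge `f ∈ F_e` to an edge
`f₀ ∈ F_e` of strength `κ_e` can raise the strength of an edge `g` only if a set realizing its new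
strength contains `f₀` (uncrossing), hence only up to `κ_e + δ`. Minimality of `Φ_λ` then gives
`k_f ≤ κ_e + log (1 + |F| e λ) / λ`, and a limit point of minimizers as `λ → ∞` is `1`-balanced.
-/

open Filter

section Strength

variable {V F : Type} [Fintype F] (ep : F → V × V)

lemma minCutIn_eq_zero (w : F → ℝ) {X : Finset V}
    (hcut : ¬∃ S : Finset V, S ⊆ X ∧ S.Nonempty ∧ S ≠ X) : minCutIn ep w X = 0 := by
  have hvalues : {c | ∃ S : Finset V, S ⊆ X ∧ S.Nonempty ∧ S ≠ X ∧ c = cutWt ep w X S} = ∅ :=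
    Set.eq_empty_of_forall_notMem fun _ ⟨S, hSX, hS, hne, _⟩ => hcut ⟨S, hSX, hS, hne⟩
  rw [minCutIn, hvalues, Real.sInf_empty]

variable [Fintype V]

lemma finite_cutWt_values (w : F → ℝ) (X : Finset V) :
    {c | ∃ S : Finset V, S ⊆ X ∧ S.Nonempty ∧ S ≠ X ∧ c = cutWt ep w X S}.Finite :=
  (Set.finite_range (cutWt ep w X)).subset fun _ ⟨S, _, _, _, hc⟩ => ⟨S, hc.symm⟩

lemma minCutIn_le_cutWt (w : F → ℝ) {X S : Finset V} (hSX : S ⊆ X) (hS : S.Nonempty)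
    (hne : S ≠ X) : minCutIn ep w X ≤ cutWt ep w X S :=
  csInf_le (finite_cutWt_values ep w X).bddBelow ⟨S, hSX, hS, hne, rfl⟩

lemma exists_minCutIn_eq_cutWt (w : F → ℝ) {X : Finset V}
    (hcut : ∃ S : Finset V, S ⊆ X ∧ S.Nonempty ∧ S ≠ X) :
    ∃ S : Finset V, S ⊆ X ∧ S.Nonempty ∧ S ≠ X ∧ minCutIn ep w X = cutWt ep w X S := by
  obtain ⟨S, hSX, hS, hne⟩ := hcut
  have hvalues : {c | ∃ S : Finset V, S ⊆ X ∧ S.Nonempty ∧ S ≠ X ∧ c = cutWt ep w X S}.Nonempty :=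
    ⟨_, S, hSX, hS, hne, rfl⟩
  exact hvalues.csInf_mem (finite_cutWt_values ep w X)

/-- `0 ≤ c` covers the case where `G[X]` has no cut, so that both min-cuts are `sInf ∅ = 0`. -/
lemma minCutIn_le_minCutIn_add {w w' : F → ℝ} {c : ℝ} (hc : 0 ≤ c) (X : Finset V)
    (h : ∀ S, cutWt ep w X S ≤ cutWt ep w' X S + c) :
    minCutIn ep w X ≤ minCutIn ep w' X + c := by
  by_cases hcut : ∃ S : Finset V, S ⊆ X ∧ S.Nonempty ∧ S ≠ X
  · obtain ⟨S, hSX, hS, hne, hmin⟩ := exists_minCutIn_eq_cutWt ep w' hcut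
    rw [hmin]
    exact (minCutIn_le_cutWt ep w hSX hS hne).trans (h S)
  · simp [minCutIn_eq_zero ep _ hcut, hc]

lemma finite_minCutIn_values (w : F → ℝ) (f : F) :
    {c | ∃ X : Finset V, (ep f).1 ∈ X ∧ (ep f).2 ∈ X ∧ c = minCutIn ep w X}.Finite :=
  (Set.finite_range (minCutIn ep w)).subset fun _ ⟨X, _, _, hc⟩ => ⟨X, hc.symm⟩

lemma minCutIn_le_strength (w : F → ℝ) {f : F} {X : Finset V} (h1 : (ep f).1 ∈ X)
    (h2 : (ep f).2 ∈ X) : minCutIn ep w X ≤ strength ep w f :=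
  le_csSup (finite_minCutIn_values ep w f).bddAbove ⟨X, h1, h2, rfl⟩

lemma exists_strength_eq_minCutIn (w : F → ℝ) (f : F) :
    ∃ X : Finset V, (ep f).1 ∈ X ∧ (ep f).2 ∈ X ∧ strength ep w f = minCutIn ep w X := by
  have hvalues : {c | ∃ X : Finset V, (ep f).1 ∈ X ∧ (ep f).2 ∈ X ∧ c = minCutIn ep w X}.Nonempty :=
    ⟨_, Finset.univ, mem_univ _, mem_univ _, rfl⟩
  exact hvalues.csSup_mem (finite_minCutIn_values ep w f)

lemma strength_le_strength_add {w w' : F → ℝ} {c : ℝ} (hc : 0 ≤ c)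
    (h : ∀ S X : Finset V, cutWt ep w X S ≤ cutWt ep w' X S + c) (f : F) :
    strength ep w f ≤ strength ep w' f + c := by
  obtain ⟨X, h1, h2, hX⟩ := exists_strength_eq_minCutIn ep w f
  rw [hX]
  exact (minCutIn_le_minCutIn_add ep hc X (h · X)).trans
    (add_le_add_left (minCutIn_le_strength ep w' h1 h2) c)

lemma strength_mono {w w' : F → ℝ} (h : w ≤ w') (f : F) :
    strength ep w f ≤ strength ep w' f := by
  simpa using strength_le_strength_add ep le_rfl
    (fun S X => by simpa [cutWt] using sum_le_sum fun g _ => by split_ifs <;> simp [h g]) f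

lemma strength_le_strength_add_sum_abs (w w' : F → ℝ) (f : F) :
    strength ep w f ≤ strength ep w' f + ∑ g, |w g - w' g| :=
  strength_le_strength_add ep (by positivity) (fun S X => by
    rw [cutWt, cutWt, ← sum_add_distrib]
    refine sum_le_sum fun g _ => ?_
    split_ifs
    · linarith [le_abs_self (w g - w' g)]
    · simp) f

/-- Uncrossing: a vertex set realizing the new strength of `g` contains both ends of `f₀`,
since otherwise its min-cut is unchanged. -/
lemma strength_le_strength_of_strength_lt {w w' : F → ℝ} {f₀ : F} (hw : ∀ g ≠ f₀, w' g = w g)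
    {g : F} (hlt : strength ep w g < strength ep w' g) :
    strength ep w' g ≤ strength ep w' f₀ := by
  obtain ⟨X, h1, h2, hX⟩ := exists_strength_eq_minCutIn ep w' g
  by_cases hf₀ : (ep f₀).1 ∈ X ∧ (ep f₀).2 ∈ X
  · exact hX ▸ minCutIn_le_strength ep w' hf₀.1 hf₀.2
  · have hcut : ∀ S, cutWt ep w' X S ≤ cutWt ep w X S + 0 := fun S => by
      rw [add_zero]
      refine sum_le_sum fun g' _ => ?_
      split_ifs with hg'
      · exact (hw g' fun h => hf₀ (h ▸ ⟨hg'.1, hg'.2.1⟩)).le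
      · exact le_rfl
    have := (minCutIn_le_minCutIn_add ep le_rfl X hcut).trans
      (add_le_add_left (minCutIn_le_strength ep w h1 h2) 0)
    linarith

end Strength

section Transfer

variable {F : Type}

noncomputable def transfer (w : F → ℝ) (f f₀ : F) (δ : ℝ) : F → ℝ :=
  w - Pi.single f δ + Pi.single f₀ δ

lemma transfer_apply (w : F → ℝ) (f f₀ g : F) (δ : ℝ) :
    transfer w f f₀ δ g = w g - (if g = f then δ else 0) + (if g = f₀ then δ else 0) := by
  simp [transfer, Pi.single_apply]

variable [Fintype F]

lemma sum_transfer_mul (w a : F → ℝ) (f f₀ : F) (δ : ℝ) :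
    ∑ g, transfer w f f₀ δ g * a g = ∑ g, w g * a g - δ * a f + δ * a f₀ := by
  simp [transfer, add_mul, sub_mul, sum_add_distrib, Pi.single_apply]

variable {V : Type} [Fintype V] (ep : F → V × V)

lemma strength_transfer_le (w : F → ℝ) (f f₀ g : F) {δ : ℝ} (hδ : 0 ≤ δ) :
    strength ep (transfer w f f₀ δ) g ≤ strength ep w g + δ ∧
      (strength ep w g < strength ep (transfer w f f₀ δ) g →
        strength ep (transfer w f f₀ δ) g ≤ strength ep w f₀ + δ) := by
  have hw₁ : (w - Pi.single f δ : F → ℝ) ≤ w := fun g => by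
    by_cases hg : g = f <;> simp [hg, hδ]
  have hadd : ∀ g', strength ep (transfer w f f₀ δ) g'
      ≤ strength ep (w - Pi.single f δ) g' + δ := fun g' => by
    have hsum : ∑ g, |transfer w f f₀ δ g - (w - Pi.single f δ : F → ℝ) g| = δ := by
      simp only [transfer, Pi.add_apply, add_sub_cancel_left, Pi.single_apply]
      simp [apply_ite (|·|), abs_of_nonneg hδ]
    have h := strength_le_strength_add_sum_abs ep (transfer w f f₀ δ) (w - Pi.single f δ) g'
    rwa [hsum] at h
  refine ⟨(hadd g).trans (by linarith [strength_mono ep hw₁ g]), fun hlt => ?_⟩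
  calc strength ep (transfer w f f₀ δ) g
      ≤ strength ep (transfer w f f₀ δ) f₀ :=
        strength_le_strength_of_strength_lt ep (fun g' hg' => by simp [transfer, hg'])
          ((strength_mono ep hw₁ g).trans_lt hlt)
    _ ≤ strength ep w f₀ + δ := (hadd f₀).trans (by linarith [strength_mono ep hw₁ f₀])

end Transfer

lemma exp_mul_le_exp_mul_add {l a b c d : ℝ} (hl : 0 ≤ l) (hd : 0 ≤ d) (hab : a ≤ b + d)
    (hac : b < a → a ≤ c + d) :
    Real.exp (l * a) ≤ Real.exp (l * b) + l * d * Real.exp (l * (c + d)) := by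
  have hterm : 0 ≤ l * d * Real.exp (l * (c + d)) := by positivity
  rcases le_or_gt a b with hba | hba
  · linarith [Real.exp_le_exp.2 (mul_le_mul_of_nonneg_left hba hl)]
  · -- `exp` is convex: `exp y - exp x ≤ (y - x) exp y`
    have hconv := mul_le_mul_of_nonneg_left (Real.add_one_le_exp (l * b - l * a))
      (Real.exp_pos (l * a)).le
    rw [← Real.exp_add, add_sub_cancel] at hconv
    have hexp := Real.exp_le_exp.2 (mul_le_mul_of_nonneg_left (hac hba) hl)
    have hgap : l * a - l * b ≤ l * d := by nlinarith
    have := mul_le_mul hgap hexp (Real.exp_pos _).le (by positivity)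
    nlinarith

section Potential

variable {V F : Type} [Fintype V] [Fintype F] (ep : F → V × V)

noncomputable def potential (l : ℝ) (w : F → ℝ) : ℝ :=
  ∑ g, w g * Real.exp (l * strength ep w g)

lemma continuous_potential (l : ℝ) (hstrength : ∀ g, Continuous fun w => strength ep w g) :
    Continuous (potential ep l) := by
  unfold potential
  fun_prop

lemma potential_transfer_le {l δ : ℝ} (hl : 0 ≤ l) (hδ : 0 ≤ δ) (w : F → ℝ) (f f₀ : F)
    (hw : 0 ≤ transfer w f f₀ δ) :
    potential ep l (transfer w f f₀ δ) ≤ potential ep l w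
      - δ * Real.exp (l * strength ep w f) + δ * Real.exp (l * strength ep w f₀)
      + (∑ g, transfer w f f₀ δ g) * (l * δ * Real.exp (l * (strength ep w f₀ + δ))) := by
  calc potential ep l (transfer w f f₀ δ)
      ≤ ∑ g, transfer w f f₀ δ g * (Real.exp (l * strength ep w g)
          + l * δ * Real.exp (l * (strength ep w f₀ + δ))) := by
        refine sum_le_sum fun g _ => mul_le_mul_of_nonneg_left ?_ (hw g)
        obtain ⟨hle, hlt⟩ := strength_transfer_le ep w f f₀ g hδ
        exact exp_mul_le_exp_mul_add hl hδ hle hlt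
    _ = _ := by
        simp only [mul_add, sum_add_distrib, sum_transfer_mul, ← sum_mul, potential]

end Potential

lemma continuous_of_le_add_sum_abs {F : Type} [Fintype F] {φ : (F → ℝ) → ℝ}
    (h : ∀ w w', φ w ≤ φ w' + ∑ g, |w g - w' g|) : Continuous φ := by
  refine (LipschitzWith.of_le_add_mul' (Fintype.card F) fun w w' => (h w w').trans ?_).continuous
  gcongr
  calc ∑ g, |w g - w' g| ≤ ∑ _g : F, dist w w' :=
        sum_le_sum fun g _ => (Real.dist_eq _ _).symm.trans_le (dist_le_pi_dist w w' g)
    _ = Fintype.card F * dist w w' := by simp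

section Clique

variable {V E : Type} [LinearOrder V] {he : E → Finset V}

lemma exists_cliqueEdges_fst_eq {e : E} (he2 : 2 ≤ (he e).card) :
    ∃ f : CliqueEdges he, f.1.1 = e := by
  obtain ⟨a, ha, b, hb, hab⟩ := Finset.one_lt_card.1 he2
  rcases hab.lt_or_gt with h | h
  · exact ⟨⟨⟨e, a, b⟩, ha, hb, h⟩, rfl⟩
  · exact ⟨⟨⟨e, b, a⟩, hb, ha, h⟩, rfl⟩

variable [Fintype V] [Fintype E]

lemma finite_strength_values (w : CliqueEdges he → ℝ) (e : E) :
    {c | ∃ f : CliqueEdges he, f.1.1 = e ∧ c = strength (cep he) w f}.Finite :=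
  (Set.finite_range (strength (cep he) w)).subset fun _ ⟨f, _, hc⟩ => ⟨f, hc.symm⟩

lemma kappa_le_strength (w : CliqueEdges he → ℝ) {f : CliqueEdges he} {e : E} (hf : f.1.1 = e) :
    kappa he w e ≤ strength (cep he) w f :=
  csInf_le (finite_strength_values w e).bddBelow ⟨f, hf, rfl⟩

lemma exists_kappa_eq_strength (w : CliqueEdges he → ℝ) {e : E} (he2 : 2 ≤ (he e).card) :
    ∃ f : CliqueEdges he, f.1.1 = e ∧ kappa he w e = strength (cep he) w f := by
  obtain ⟨f, hf⟩ := exists_cliqueEdges_fst_eq he2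
  have hvalues : {c | ∃ f : CliqueEdges he, f.1.1 = e ∧ c = strength (cep he) w f}.Nonempty :=
    ⟨_, f, hf, rfl⟩
  exact hvalues.csInf_mem (finite_strength_values w e)

lemma continuous_strength (f : CliqueEdges he) :
    Continuous fun w => strength (cep he) w f :=
  continuous_of_le_add_sum_abs fun w w' => strength_le_strength_add_sum_abs (cep he) w w' f

lemma continuous_kappa {e : E} (he2 : 2 ≤ (he e).card) :
    Continuous fun w => kappa he w e :=
  continuous_of_le_add_sum_abs fun w w' => by
    obtain ⟨f, hf, hκ⟩ := exists_kappa_eq_strength w' he2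
    exact hκ ▸ (kappa_le_strength w hf).trans (strength_le_strength_add_sum_abs (cep he) w w' f)

variable (he) in
def cliqueWeights : Set (CliqueEdges he → ℝ) :=
  {w | (∀ f, 0 ≤ w f) ∧ ∀ e : E, (∑ f : CliqueEdges he, if f.1.1 = e then w f else 0) = 1}

lemma le_one_of_mem_cliqueWeights {w : CliqueEdges he → ℝ} (hw : w ∈ cliqueWeights he)
    (f : CliqueEdges he) : w f ≤ 1 := by
  have := single_le_sum (f := fun g : CliqueEdges he => if g.1.1 = f.1.1 then w g else 0)
    (fun g _ => by split_ifs <;> simp [hw.1 g]) (mem_univ f)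
  simpa [hw.2] using this

lemma isCompact_cliqueWeights : IsCompact (cliqueWeights he) := by
  refine isCompact_univ_pi (fun _ => isCompact_Icc (a := (0 : ℝ)) (b := 1)) |>.of_isClosed_subset
    ?_ fun w hw f _ => ⟨hw.1 f, le_one_of_mem_cliqueWeights hw f⟩
  simp only [cliqueWeights, Set.ofPred_and, Set.ofPred_forall]
  exact (isClosed_iInter fun f => isClosed_le continuous_const (continuous_apply f)).inter
    (isClosed_iInter fun e => isClosed_eq
      (continuous_finsetSum _ fun g _ => by split_ifs <;> fun_prop) continuous_const)

lemma cliqueWeights_nonempty (hhe : ∀ e, 2 ≤ (he e).card) : (cliqueWeights he).Nonempty := by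
  refine ⟨fun f => ((univ.filter fun g : CliqueEdges he => g.1.1 = f.1.1).card : ℝ)⁻¹,
    fun f => by positivity, fun e => ?_⟩
  obtain ⟨f, hf⟩ := exists_cliqueEdges_fst_eq (hhe e)
  rw [← sum_filter, sum_congr rfl fun g hg => by rw [(mem_filter.1 hg).2], sum_const,
    nsmul_eq_mul, mul_inv_cancel₀]
  exact Nat.cast_ne_zero.2 (card_ne_zero.2 ⟨f, mem_filter.2 ⟨mem_univ f, hf⟩⟩)

lemma transfer_mem_cliqueWeights {w : CliqueEdges he → ℝ} (hw : w ∈ cliqueWeights he)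
    {f f₀ : CliqueEdges he} (hf₀ : f₀.1.1 = f.1.1) {δ : ℝ} (hδ : 0 ≤ δ) (hδf : δ ≤ w f) :
    transfer w f f₀ δ ∈ cliqueWeights he := by
  refine ⟨fun g => ?_, fun e => ?_⟩
  · have := hw.1 g
    rw [transfer_apply]
    split_ifs <;> subst_vars <;> linarith
  · have key := sum_transfer_mul w (fun g => if g.1.1 = e then 1 else 0) f f₀ δ
    simp only [mul_ite, mul_one, mul_zero, hf₀] at key
    rw [key, hw.2 e]
    ring

end Clique

section Minimizer

variable {V E : Type} [Fintype V] [LinearOrder V] [Fintype E] {he : E → Finset V}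

/-- At a minimizer of the potential, moving weight `δ = min (w f) λ⁻¹` from `f` to an edge of
minimum strength in the same clique cannot decrease the potential. -/
lemma exp_strength_le_of_isMinOn (hhe : ∀ e, 2 ≤ (he e).card) {l : ℝ} (hl : 0 < l)
    {w : CliqueEdges he → ℝ} (hw : w ∈ cliqueWeights he)
    (hmin : IsMinOn (potential (cep he) l) (cliqueWeights he) w)
    {f : CliqueEdges he} (hf : 0 < w f) :
    Real.exp (l * strength (cep he) w f) ≤ Real.exp (l * kappa he w f.1.1)
      * (1 + Fintype.card (CliqueEdges he) * Real.exp 1 * l) := by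
  obtain ⟨f₀, hf₀, hκ⟩ := exists_kappa_eq_strength w (hhe f.1.1)
  set δ := min (w f) l⁻¹
  have hδ : 0 < δ := lt_min hf (inv_pos.2 hl)
  have hlδ : Real.exp (l * δ) ≤ Real.exp 1 := Real.exp_le_exp.2 <|
    (mul_le_mul_of_nonneg_left (min_le_right _ _) hl.le).trans (mul_inv_cancel₀ hl.ne').le
  have hmem := transfer_mem_cliqueWeights hw hf₀ hδ.le (min_le_left _ _)
  have hmass : ∑ g, transfer w f f₀ δ g ≤ Fintype.card (CliqueEdges he) :=
    (sum_le_sum fun g _ => le_one_of_mem_cliqueWeights hmem g).trans_eq (by simp)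
  have hpot := (hmin hmem).trans (potential_transfer_le (cep he) hl.le hδ.le w f f₀ hmem.1)
  rw [← hκ, mul_add, Real.exp_add] at hpot
  have : δ * Real.exp (l * strength (cep he) w f) ≤ δ * (Real.exp (l * kappa he w f.1.1)
      * (1 + Fintype.card (CliqueEdges he) * Real.exp 1 * l)) := by
    nlinarith [mul_le_mul hmass (mul_le_mul_of_nonneg_left hlδ (by positivity : 0 ≤ l * δ *
      Real.exp (l * kappa he w f.1.1))) (by positivity) (by positivity)]
  exact le_of_mul_le_mul_left this hδ

lemma exists_mem_cliqueWeights_strength_le_kappa_add (hhe : ∀ e, 2 ≤ (he e).card) {ε : ℝ}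
    (hε : 0 < ε) : ∃ w ∈ cliqueWeights he,
      ∀ f, 0 < w f → strength (cep he) w f ≤ kappa he w f.1.1 + ε := by
  set C := Fintype.card (CliqueEdges he) * Real.exp 1
  set l := 2 * (C + 1) / ε ^ 2
  have hl : 0 < l := by positivity
  obtain ⟨w, hw, hmin⟩ := isCompact_cliqueWeights.exists_isMinOn (cliqueWeights_nonempty hhe)
    (continuous_potential (cep he) l continuous_strength).continuousOn
  refine ⟨w, hw, fun f hf => le_of_not_gt fun hlt => ?_⟩
  have hexp := (Real.exp_lt_exp.2 (mul_lt_mul_of_pos_left hlt hl)).trans_le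
    (exp_strength_le_of_isMinOn hhe hl hw hmin hf)
  rw [mul_add, Real.exp_add, mul_lt_mul_iff_right₀ (Real.exp_pos _)] at hexp
  -- `exp (λ ε) ≥ 1 + λ ε + (λ ε)² / 2 = 1 + λ ε + λ (C + 1)` by the choice of `λ`
  have hquad := Real.quadratic_le_exp_of_nonneg (mul_pos hl hε).le
  have hl2 : (l * ε) ^ 2 / 2 = l * (C + 1) := by
    simp only [l]
    field_simp
  nlinarith

lemma exists_mem_cliqueWeights_strength_le_kappa (hhe : ∀ e, 2 ≤ (he e).card) :
    ∃ w ∈ cliqueWeights he, ∀ f, 0 < w f → strength (cep he) w f ≤ kappa he w f.1.1 := by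
  choose ws hws hbound using fun n : ℕ =>
    exists_mem_cliqueWeights_strength_le_kappa_add hhe (Nat.one_div_pos_of_nat (n := n))
  obtain ⟨w, hw, φ, hφ, hlim⟩ := isCompact_cliqueWeights.tendsto_subseq hws
  refine ⟨w, hw, fun f hf => ?_⟩
  have hpos : ∀ᶠ n in atTop, 0 < ws (φ n) f :=
    (((continuous_apply f).tendsto w).comp hlim).eventually (lt_mem_nhds hf)
  simpa using le_of_tendsto_of_tendsto (((continuous_strength f).tendsto w).comp hlim)
    ((((continuous_kappa (hhe f.1.1)).tendsto w).comp hlim).add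
      (tendsto_one_div_add_atTop_nhds_zero_nat.comp hφ.tendsto_atTop))
    (hpos.mono fun n hn => hbound (φ n) f hn)

end Minimizer

/-- Every unweighted finite multi-hypergraph all of whose hyperedges have at
least 2 vertices admits a 1-balanced weight assignment: one in which the clique weights of each
hyperedge sum to 1 and every positive-weight edge of the clique `F_e` has strength exactly
`κ_e` in the induced auxiliary graph. -/
theorem stmt3 {V E : Type} [Fintype V] [LinearOrder V] [Fintype E]
    (he : E → Finset V) (hhe : ∀ e, 2 ≤ (he e).card) :
    ∃ w : CliqueEdges he → ℝ, (∀ f, 0 ≤ w f) ∧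
      ∀ e : E, (∑ f : CliqueEdges he, if f.1.1 = e then w f else 0) = 1 ∧
        ∀ f : CliqueEdges he, f.1.1 = e → 0 < w f →
          strength (cep he) w f = kappa he w e := by
  obtain ⟨w, hw, hle⟩ := exists_mem_cliqueWeights_strength_le_kappa hhe
  refine ⟨w, hw.1, fun e => ⟨hw.2 e, fun f hf hpos => ?_⟩⟩
  subst hf
  exact (hle f hpos).antisymm (kappa_le_strength w rfl)
end

section
/- Let G = (V, F, w) be a weighted multigraph, let f ∈ F, let δ ≥ 0, and let G' = (V, F, w') be the weighted multigraph with w'(f) = w(f) + δ and w'(g) = w(g) for all g ≠ f. Denote by k_{f'} and k'_{f'} the strengths of an edge f' in G and in G', respectively. Then for every edge f' ∈ F: k_{f'} ≤ k'_{f'} ≤ k_{f'} + δ. -/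
open Finset
open scoped Classical

section aux
variable {V F : Type} [Fintype V] [Fintype F]

lemma cutWt_nonneg (ep : F → V × V) {w : F → ℝ} (hw : ∀ g, 0 ≤ w g)
    (X S : Finset V) : 0 ≤ cutWt ep w X S := by
  refine Finset.sum_nonneg fun g _ => ?_
  split <;> [exact hw g; exact le_rfl]

lemma cutWt_mono (ep : F → V × V) {w u : F → ℝ} (h : ∀ g, w g ≤ u g)
    (X S : Finset V) : cutWt ep w X S ≤ cutWt ep u X S := by
  refine Finset.sum_le_sum fun g _ => ?_
  split <;> [exact h g; exact le_rfl]

lemma cutWt_le_total (ep : F → V × V) {w : F → ℝ} (hw : ∀ g, 0 ≤ w g)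
    (X S : Finset V) : cutWt ep w X S ≤ ∑ g, w g := by
  refine Finset.sum_le_sum fun g _ => ?_
  split <;> [exact le_rfl; exact hw g]

lemma cutWt_update_le [DecidableEq F] (ep : F → V × V) (w : F → ℝ) (f : F) {δ : ℝ}
    (hδ : 0 ≤ δ) (X S : Finset V) :
    cutWt ep (Function.update w f (w f + δ)) X S ≤ cutWt ep w X S + δ := by
  have h : cutWt ep (Function.update w f (w f + δ)) X S ≤
      ∑ g : F, ((if (ep g).1 ∈ X ∧ (ep g).2 ∈ X ∧ crossesCut ep S g then w g else 0)
        + (if g = f then δ else 0)) := by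
    refine Finset.sum_le_sum fun g _ => ?_
    by_cases hg : g = f
    · subst hg
      simp only [Function.update_self, if_pos rfl]
      split
      · exact le_rfl
      · simpa using hδ
    · rw [Function.update_of_ne hg, if_neg hg, add_zero]
  have h2 : ∑ g : F, ((if (ep g).1 ∈ X ∧ (ep g).2 ∈ X ∧ crossesCut ep S g then w g else 0)
        + (if g = f then δ else 0)) = cutWt ep w X S + δ := by
    rw [Finset.sum_add_distrib]
    congr 1
    simp [Finset.sum_ite_eq']
  rw [h2] at h
  exact h


lemma minCutSet_nonempty (ep : F → V × V) (w : F → ℝ) {X : Finset V} {a b : V}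
    (ha : a ∈ X) (hb : b ∈ X) (hab : a ≠ b) :
    {c : ℝ | ∃ S : Finset V, S ⊆ X ∧ S.Nonempty ∧ S ≠ X ∧ c = cutWt ep w X S}.Nonempty := by
  refine ⟨cutWt ep w X {a}, {a}, Finset.singleton_subset_iff.2 ha,
    Finset.singleton_nonempty a, fun h => ?_, rfl⟩
  exact hab (Finset.mem_singleton.1 (h ▸ hb)).symm

lemma minCutSet_bddBelow (ep : F → V × V) {w : F → ℝ} (hw : ∀ g, 0 ≤ w g) (X : Finset V) :
    BddBelow {c : ℝ | ∃ S : Finset V, S ⊆ X ∧ S.Nonempty ∧ S ≠ X ∧ c = cutWt ep w X S} := by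
  refine ⟨0, fun c hc => ?_⟩
  obtain ⟨S, _, _, _, rfl⟩ := hc
  exact cutWt_nonneg ep hw X S

lemma minCutIn_le_total (ep : F → V × V) {w : F → ℝ} (hw : ∀ g, 0 ≤ w g)
    {X : Finset V} {a b : V} (ha : a ∈ X) (hb : b ∈ X) (hab : a ≠ b) :
    minCutIn ep w X ≤ ∑ g, w g := by
  have h1 : minCutIn ep w X ≤ cutWt ep w X {a} := by
    refine csInf_le (minCutSet_bddBelow ep hw X) ?_
    refine ⟨{a}, Finset.singleton_subset_iff.2 ha, Finset.singleton_nonempty a, fun h => ?_, rfl⟩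
    exact hab (Finset.mem_singleton.1 (h ▸ hb)).symm
  exact h1.trans (cutWt_le_total ep hw X {a})

lemma minCutIn_mono (ep : F → V × V) {w u : F → ℝ} (hw : ∀ g, 0 ≤ w g)
    (h : ∀ g, w g ≤ u g) {X : Finset V} {a b : V}
    (ha : a ∈ X) (hb : b ∈ X) (hab : a ≠ b) :
    minCutIn ep w X ≤ minCutIn ep u X := by
  refine le_csInf (minCutSet_nonempty ep u ha hb hab) fun c hc => ?_
  obtain ⟨S, hS1, hS2, hS3, rfl⟩ := hc
  exact (csInf_le (minCutSet_bddBelow ep hw X) ⟨S, hS1, hS2, hS3, rfl⟩).trans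
    (cutWt_mono ep h X S)

lemma minCutIn_update_le [DecidableEq F] (ep : F → V × V) {w : F → ℝ} (hw : ∀ g, 0 ≤ w g)
    (f : F) {δ : ℝ} (hδ : 0 ≤ δ) {X : Finset V} {a b : V}
    (ha : a ∈ X) (hb : b ∈ X) (hab : a ≠ b) :
    minCutIn ep (Function.update w f (w f + δ)) X ≤ minCutIn ep w X + δ := by
  have hw' : ∀ g, 0 ≤ Function.update w f (w f + δ) g := by
    intro g
    by_cases hg : g = f
    · subst hg; rw [Function.update_self]; exact add_nonneg (hw _) hδ
    · rw [Function.update_of_ne hg]; exact hw g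
  rw [← sub_le_iff_le_add]
  refine le_csInf (minCutSet_nonempty ep w ha hb hab) fun c hc => ?_
  obtain ⟨S, hS1, hS2, hS3, rfl⟩ := hc
  rw [sub_le_iff_le_add]
  exact (csInf_le (minCutSet_bddBelow ep hw' X) ⟨S, hS1, hS2, hS3, rfl⟩).trans
    (cutWt_update_le ep w f hδ X S)

lemma strengthSet_nonempty (ep : F → V × V) (w : F → ℝ) (f' : F) :
    {c : ℝ | ∃ X : Finset V, (ep f').1 ∈ X ∧ (ep f').2 ∈ X ∧ c = minCutIn ep w X}.Nonempty :=
  ⟨minCutIn ep w Finset.univ, Finset.univ, Finset.mem_univ _, Finset.mem_univ _, rfl⟩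

lemma strengthSet_bddAbove (ep : F → V × V) (hep : ∀ g, (ep g).1 ≠ (ep g).2)
    {w : F → ℝ} (hw : ∀ g, 0 ≤ w g) (f' : F) :
    BddAbove {c : ℝ | ∃ X : Finset V, (ep f').1 ∈ X ∧ (ep f').2 ∈ X ∧ c = minCutIn ep w X} := by
  refine ⟨∑ g, w g, fun c hc => ?_⟩
  obtain ⟨X, h1, h2, rfl⟩ := hc
  exact minCutIn_le_total ep hw h1 h2 (hep f')

end aux

/-- Increasing the weight of a single edge by `δ ≥ 0` cannot decrease the
strength of any edge, and can increase each strength by at most `δ`. -/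
theorem stmt4 {V F : Type} [Fintype V] [Fintype F] [DecidableEq F]
    (ep : F → V × V) (hep : ∀ f, (ep f).1 ≠ (ep f).2)
    (w : F → ℝ) (hw : ∀ f, 0 ≤ w f)
    (f : F) (δ : ℝ) (hδ : 0 ≤ δ)
    (w' : F → ℝ) (hw' : w' = Function.update w f (w f + δ)) :
    ∀ f' : F, strength ep w f' ≤ strength ep w' f' ∧
      strength ep w' f' ≤ strength ep w f' + δ := by
  subst hw'
  intro f'
  set u := Function.update w f (w f + δ) with hu
  have hu0 : ∀ g, 0 ≤ u g := by
    intro g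
    by_cases hg : g = f
    · subst hg; rw [hu, Function.update_self]; exact add_nonneg (hw _) hδ
    · rw [hu, Function.update_of_ne hg]; exact hw g
  have hle : ∀ g, w g ≤ u g := by
    intro g
    by_cases hg : g = f
    · subst hg; rw [hu, Function.update_self]; linarith [hδ]
    · rw [hu, Function.update_of_ne hg]
  constructor
  · refine csSup_le (strengthSet_nonempty ep w f') fun c hc => ?_
    obtain ⟨X, h1, h2, rfl⟩ := hc
    exact (minCutIn_mono ep hw hle h1 h2 (hep f')).trans
      (le_csSup (strengthSet_bddAbove ep hep hu0 f') ⟨X, h1, h2, rfl⟩)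
  · refine csSup_le (strengthSet_nonempty ep u f') fun c hc => ?_
    obtain ⟨X, h1, h2, rfl⟩ := hc
    have := minCutIn_update_le ep hw f hδ h1 h2 (hep f')
    have h4 : minCutIn ep w X ≤ strength ep w f' :=
      le_csSup (strengthSet_bddAbove ep hep hw f') ⟨X, h1, h2, rfl⟩
    calc minCutIn ep u X ≤ minCutIn ep w X + δ := this
      _ ≤ strength ep w f' + δ := by linarith
end

section
/- Let G = (V, F, w) be a weighted multigraph, let f ∈ F, let δ ≥ 0, and let G' = (V, F, w') be the weighted multigraph with w'(f) = w(f) + δ and w'(g) = w(g) for all g ≠ f. Denote by k_{f'} and k'_{f'} the strengths of an edge f' in G and in G', respectively. Then for every edge f' ∈ F with k'_{f'} > k_{f'}, one has k_{f'} ≥ k_f and k'_{f'} ≤ k'_f. -/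
open Finset
open scoped Classical

section Aux

set_option linter.unusedSectionVars false

variable {V F : Type} [Fintype V] [Fintype F]

/-- The set whose infimum defines `minCutIn`. -/
def cutSet (ep : F → V × V) [Fintype F] (w : F → ℝ) (X : Finset V) : Set ℝ :=
  {c : ℝ | ∃ S : Finset V, S ⊆ X ∧ S.Nonempty ∧ S ≠ X ∧ c = cutWt ep w X S}

lemma minCutIn_def (ep : F → V × V) (w : F → ℝ) (X : Finset V) :
    minCutIn ep w X = sInf (cutSet ep w X) := rfl

/-- The set whose supremum defines `strength`. -/
def strengthSet (ep : F → V × V) (w : F → ℝ) (f : F) : Set ℝ :=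
  {c : ℝ | ∃ X : Finset V, (ep f).1 ∈ X ∧ (ep f).2 ∈ X ∧ c = minCutIn ep w X}

lemma strength_def (ep : F → V × V) (w : F → ℝ) (f : F) :
    strength ep w f = sSup (strengthSet ep w f) := rfl

lemma cutSet_finite (ep : F → V × V) (w : F → ℝ) (X : Finset V) :
    (cutSet ep w X).Finite := by
  apply Set.Finite.subset (Set.finite_range (fun S : Finset V => cutWt ep w X S))
  rintro c ⟨S, _, _, _, rfl⟩
  exact ⟨S, rfl⟩

lemma cutSet_nonempty (ep : F → V × V) (w : F → ℝ) {X : Finset V} {a b : V}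
    (ha : a ∈ X) (hb : b ∈ X) (hab : a ≠ b) : (cutSet ep w X).Nonempty := by
  refine ⟨cutWt ep w X {a}, {a}, ?_, ⟨a, Finset.mem_singleton_self a⟩, ?_, rfl⟩
  · simpa using ha
  · intro h
    rw [← h] at hb
    exact hab (Finset.mem_singleton.mp hb).symm

lemma minCutIn_le (ep : F → V × V) (w : F → ℝ) {X S : Finset V}
    (hS : S ⊆ X) (h1 : S.Nonempty) (h2 : S ≠ X) :
    minCutIn ep w X ≤ cutWt ep w X S := by
  rw [minCutIn_def]
  exact csInf_le (cutSet_finite ep w X).bddBelow ⟨S, hS, h1, h2, rfl⟩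

lemma exists_minCut (ep : F → V × V) (w : F → ℝ) {X : Finset V}
    (hne : (cutSet ep w X).Nonempty) :
    ∃ S : Finset V, S ⊆ X ∧ S.Nonempty ∧ S ≠ X ∧ minCutIn ep w X = cutWt ep w X S := by
  have := hne.csInf_mem (cutSet_finite ep w X)
  rw [← minCutIn_def] at this
  exact this

lemma strengthSet_finite (ep : F → V × V) (w : F → ℝ) (f : F) :
    (strengthSet ep w f).Finite := by
  apply Set.Finite.subset (Set.finite_range (fun X : Finset V => minCutIn ep w X))
  rintro c ⟨X, _, _, rfl⟩
  exact ⟨X, rfl⟩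

lemma strengthSet_nonempty_s5 (ep : F → V × V) (w : F → ℝ) (f : F) :
    (strengthSet ep w f).Nonempty :=
  ⟨minCutIn ep w Finset.univ, Finset.univ, Finset.mem_univ _, Finset.mem_univ _, rfl⟩

lemma le_strength (ep : F → V × V) (w : F → ℝ) {f : F} {X : Finset V}
    (h1 : (ep f).1 ∈ X) (h2 : (ep f).2 ∈ X) :
    minCutIn ep w X ≤ strength ep w f := by
  rw [strength_def]
  exact le_csSup (strengthSet_finite ep w f).bddAbove ⟨X, h1, h2, rfl⟩

lemma exists_strength (ep : F → V × V) (w : F → ℝ) (f : F) :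
    ∃ X : Finset V, (ep f).1 ∈ X ∧ (ep f).2 ∈ X ∧ strength ep w f = minCutIn ep w X := by
  have := (strengthSet_nonempty_s5 ep w f).csSup_mem (strengthSet_finite ep w f)
  rw [← strength_def] at this
  exact this

lemma cutWt_update_of_neg [DecidableEq F] (ep : F → V × V) (w : F → ℝ) (f : F) (δ : ℝ)
    {X S : Finset V} (hf : ¬((ep f).1 ∈ X ∧ (ep f).2 ∈ X ∧ crossesCut ep S f)) :
    cutWt ep (Function.update w f (w f + δ)) X S = cutWt ep w X S := by
  unfold cutWt
  apply Finset.sum_congr rfl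
  intro g _
  by_cases hg : g = f
  · subst hg
    rw [if_neg hf, if_neg hf]
  · rw [Function.update_of_ne hg]

lemma minCutIn_update_of_not_mem [DecidableEq F] (ep : F → V × V) (w : F → ℝ) (f : F) (δ : ℝ)
    {X : Finset V} (hf : ¬((ep f).1 ∈ X ∧ (ep f).2 ∈ X)) :
    minCutIn ep (Function.update w f (w f + δ)) X = minCutIn ep w X := by
  rw [minCutIn_def, minCutIn_def]
  congr 1
  ext c
  constructor
  · rintro ⟨S, h1, h2, h3, rfl⟩
    exact ⟨S, h1, h2, h3,
      (cutWt_update_of_neg ep w f δ (fun h => hf ⟨h.1, h.2.1⟩))⟩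
  · rintro ⟨S, h1, h2, h3, rfl⟩
    exact ⟨S, h1, h2, h3,
      (cutWt_update_of_neg ep w f δ (fun h => hf ⟨h.1, h.2.1⟩)).symm⟩

lemma cutWt_inter_le (ep : F → V × V) {w : F → ℝ} (hw : ∀ g, 0 ≤ w g)
    {Y Z : Finset V} (hYZ : Y ⊆ Z) (S : Finset V) :
    cutWt ep w Y (S ∩ Y) ≤ cutWt ep w Z S := by
  apply Finset.sum_le_sum
  intro g _
  by_cases h : (ep g).1 ∈ Y ∧ (ep g).2 ∈ Y ∧ crossesCut ep (S ∩ Y) g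
  · rw [if_pos h, if_pos]
    refine ⟨hYZ h.1, hYZ h.2.1, ?_⟩
    rcases h.2.2 with ⟨h1, h2⟩ | ⟨h1, h2⟩
    · exact Or.inl ⟨(Finset.mem_inter.mp h1).1,
        fun hc => h2 (Finset.mem_inter.mpr ⟨hc, h.2.1⟩)⟩
    · exact Or.inr ⟨fun hc => h1 (Finset.mem_inter.mpr ⟨hc, h.1⟩),
        (Finset.mem_inter.mp h2).1⟩
  · rw [if_neg h]
    split_ifs
    · exact hw g
    · exact le_refl 0

end Aux

/-- If increasing the weight of edge `f` by `δ ≥ 0` strictly increases the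
strength of an edge `f'`, then the old strength of `f'` is at least the old strength of `f`,
and the new strength of `f'` is at most the new strength of `f`. -/
theorem stmt5 {V F : Type} [Fintype V] [Fintype F] [DecidableEq F]
    (ep : F → V × V) (hep : ∀ f, (ep f).1 ≠ (ep f).2)
    (w : F → ℝ) (hw : ∀ f, 0 ≤ w f)
    (f : F) (δ : ℝ) (hδ : 0 ≤ δ)
    (w' : F → ℝ) (hw' : w' = Function.update w f (w f + δ)) :
    ∀ f' : F, strength ep w f' < strength ep w' f' →
      strength ep w f ≤ strength ep w f' ∧ strength ep w' f' ≤ strength ep w' f := by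
  intro f' hlt
  have hw'0 : ∀ g, 0 ≤ w' g := by
    intro g
    rw [hw']
    by_cases hg : g = f
    · rw [hg, Function.update_self]; linarith [hw f]
    · rw [Function.update_of_ne hg]; exact hw g
  -- Part B first: strength ep w f ≤ strength ep w f'
  -- Find X attaining strength ep w' f'
  obtain ⟨X, hX1, hX2, hXeq⟩ := exists_strength ep w' f'
  have hXgt : strength ep w f' < minCutIn ep w' X := hXeq ▸ hlt
  have hXle : minCutIn ep w X ≤ strength ep w f' := le_strength ep w hX1 hX2
  -- f's endpoints are both in X
  have hfX : (ep f).1 ∈ X ∧ (ep f).2 ∈ X := by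
    by_contra hc
    rw [hw', minCutIn_update_of_not_mem ep w f δ hc] at hXgt
    exact absurd hXle (not_le.mpr hXgt)
  -- Find Y attaining strength ep w f
  obtain ⟨Y, hY1, hY2, hYeq⟩ := exists_strength ep w f
  -- Z = X ∪ Y
  set Z := X ∪ Y with hZdef
  have hXZ : X ⊆ Z := Finset.subset_union_left
  have hYZ : Y ⊆ Z := Finset.subset_union_right
  have hZ1 : (ep f').1 ∈ Z := hXZ hX1
  have hZ2 : (ep f').2 ∈ Z := hXZ hX2
  have hZle : minCutIn ep w Z ≤ strength ep w f' := le_strength ep w hZ1 hZ2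
  -- min cut of Z under w
  obtain ⟨S, hSZ, hSne, hSneq, hSeq⟩ :=
    exists_minCut ep w (cutSet_nonempty ep w hZ1 hZ2 (hep f'))
  -- Claim: S ∩ Y is a proper nonempty subset of Y
  have key : (S ∩ Y).Nonempty ∧ S ∩ Y ≠ Y := by
    by_cases hcross : crossesCut ep S f
    · rcases hcross with ⟨h1, h2⟩ | ⟨h1, h2⟩
      · refine ⟨⟨(ep f).1, Finset.mem_inter.mpr ⟨h1, hY1⟩⟩, ?_⟩
        intro h
        have : (ep f).2 ∈ S ∩ Y := by rw [h]; exact hY2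
        exact h2 (Finset.mem_inter.mp this).1
      · refine ⟨⟨(ep f).2, Finset.mem_inter.mpr ⟨h2, hY2⟩⟩, ?_⟩
        intro h
        have : (ep f).1 ∈ S ∩ Y := by rw [h]; exact hY1
        exact h1 (Finset.mem_inter.mp this).1
    · -- no crossing: cutWt under w' equals cutWt under w on (Z, S)
      have heqw : cutWt ep w' Z S = cutWt ep w Z S := by
        rw [hw']
        exact cutWt_update_of_neg ep w f δ (fun h => hcross h.2.2)
      -- S ∩ X cannot be a proper nonempty subset of X
      have hSX : ¬((S ∩ X).Nonempty ∧ S ∩ X ≠ X) := by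
        rintro ⟨hne, hneq⟩
        have h1 : minCutIn ep w' X ≤ cutWt ep w' X (S ∩ X) :=
          minCutIn_le ep w' Finset.inter_subset_right hne hneq
        have h2 : cutWt ep w' X (S ∩ X) ≤ cutWt ep w' Z S :=
          cutWt_inter_le ep hw'0 hXZ S
        rw [heqw, ← hSeq] at h2
        have := h1.trans (h2.trans hZle)
        exact absurd this (not_le.mpr hXgt)
    -- So S ∩ X = ∅ or S ∩ X = X
      push_neg at hSX
      by_cases hSXne : (S ∩ X).Nonempty
      · -- S ∩ X = X, i.e. X ⊆ S
        have hXS : X ⊆ S := by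
          intro x hx
          have := hSX hSXne ▸ hx
          exact (Finset.mem_inter.mp this).1
        refine ⟨⟨(ep f).1, Finset.mem_inter.mpr ⟨hXS hfX.1, hY1⟩⟩, ?_⟩
        intro h
        apply hSneq
        apply Finset.Subset.antisymm hSZ
        intro z hz
        rcases Finset.mem_union.mp hz with hzX | hzY
        · exact hXS hzX
        · have : z ∈ S ∩ Y := by rw [h]; exact hzY
          exact (Finset.mem_inter.mp this).1
      · -- S ∩ X = ∅, so S ⊆ Y
        rw [Finset.not_nonempty_iff_eq_empty] at hSXne
        have hSY : S ⊆ Y := by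
          intro z hz
          rcases Finset.mem_union.mp (hSZ hz) with hzX | hzY
          · exact absurd (Finset.mem_inter.mpr ⟨hz, hzX⟩) (by simp [hSXne])
          · exact hzY
        have hSYeq : S ∩ Y = S := Finset.inter_eq_left.mpr hSY
        refine ⟨by rw [hSYeq]; exact hSne, ?_⟩
        rw [hSYeq]
        intro h
        have : (ep f).1 ∈ S := by rw [h]; exact hY1
        exact absurd (Finset.mem_inter.mpr ⟨this, hfX.1⟩) (by simp [hSXne])
  -- conclude part B
  have hB : strength ep w f ≤ strength ep w f' := by
    have h1 : minCutIn ep w Y ≤ cutWt ep w Y (S ∩ Y) :=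
      minCutIn_le ep w Finset.inter_subset_right key.1 key.2
    have h2 : cutWt ep w Y (S ∩ Y) ≤ cutWt ep w Z S := cutWt_inter_le ep hw hYZ S
    rw [← hSeq] at h2
    calc strength ep w f = minCutIn ep w Y := hYeq
      _ ≤ cutWt ep w Y (S ∩ Y) := h1
      _ ≤ minCutIn ep w Z := h2
      _ ≤ strength ep w f' := hZle
  refine ⟨hB, ?_⟩
  -- Part A: strength ep w' f' ≤ strength ep w' f
  have hA : strength ep w' f' ≤ max (strength ep w f') (strength ep w' f) := by
    rw [strength_def]
    apply csSup_le (strengthSet_nonempty_s5 ep w' f')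
    rintro c ⟨T, hT1, hT2, rfl⟩
    by_cases hfT : (ep f).1 ∈ T ∧ (ep f).2 ∈ T
    · exact le_max_of_le_right (le_strength ep w' hfT.1 hfT.2)
    · rw [hw', minCutIn_update_of_not_mem ep w f δ hfT, ← hw']
      exact le_max_of_le_left (le_strength ep w hT1 hT2)
  rcases max_cases (strength ep w f') (strength ep w' f) with ⟨heq, _⟩ | ⟨heq, _⟩
  · rw [heq] at hA
    exact absurd (lt_of_lt_of_le hlt hA) (lt_irrefl _)
  · rwa [heq] at hA
end

section
/- Let G = (V, F, w) be a weighted multigraph in which every weight is an integer multiple of some real δ > 0, let f ∈ F, and let G' = (V, F, w') be obtained from G by increasing the weight of f by δ (leaving all other weights unchanged). Denote by k and k' strengths in G and G' respectively. Then for every edge f' ∈ F whose strength changes (i.e., k'_{f'} ≠ k_{f'}), one has k_{f'} = k_f and k'_{f'} = k'_f; that is, f' must have the same strength as f both before and after the weight change. -/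
open Finset
open scoped Classical
set_option linter.unusedSectionVars false
set_option linter.unusedVariables false

namespace Stmt7

variable {V F : Type} [Fintype V] [Fintype F]

/-- The set of cut values of `G[X]`. -/
def cutSet (ep : F → V × V) (w : F → ℝ) (X : Finset V) : Set ℝ :=
  {c : ℝ | ∃ S : Finset V, S ⊆ X ∧ S.Nonempty ∧ S ≠ X ∧ c = cutWt ep w X S}

lemma minCutIn_def (ep : F → V × V) (w : F → ℝ) (X : Finset V) :
    minCutIn ep w X = sInf (cutSet ep w X) := rfl

lemma cutSet_finite (ep : F → V × V) (w : F → ℝ) (X : Finset V) :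
    (cutSet ep w X).Finite :=
  Set.Finite.subset (Set.finite_range fun S : Finset V => cutWt ep w X S)
    (by rintro c ⟨S, _, _, _, rfl⟩; exact ⟨S, rfl⟩)

/-- The set of candidate values for the strength of `f`. -/
def strSet (ep : F → V × V) (w : F → ℝ) (f : F) : Set ℝ :=
  {c : ℝ | ∃ X : Finset V, (ep f).1 ∈ X ∧ (ep f).2 ∈ X ∧ c = minCutIn ep w X}

lemma strength_def (ep : F → V × V) (w : F → ℝ) (f : F) :
    strength ep w f = sSup (strSet ep w f) := rfl

lemma strSet_finite (ep : F → V × V) (w : F → ℝ) (f : F) :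
    (strSet ep w f).Finite :=
  Set.Finite.subset (Set.finite_range fun X : Finset V => minCutIn ep w X)
    (by rintro c ⟨X, _, _, rfl⟩; exact ⟨X, rfl⟩)

lemma strSet_nonempty (ep : F → V × V) (w : F → ℝ) (f : F) :
    (strSet ep w f).Nonempty :=
  ⟨minCutIn ep w univ, univ, mem_univ _, mem_univ _, rfl⟩

lemma strength_mem (ep : F → V × V) (w : F → ℝ) (f : F) :
    strength ep w f ∈ strSet ep w f :=
  (strSet_nonempty ep w f).csSup_mem (strSet_finite ep w f)

lemma minCutIn_le_strength (ep : F → V × V) (w : F → ℝ) (f : F) {X : Finset V}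
    (h1 : (ep f).1 ∈ X) (h2 : (ep f).2 ∈ X) :
    minCutIn ep w X ≤ strength ep w f :=
  le_csSup (strSet_finite ep w f).bddAbove ⟨X, h1, h2, rfl⟩

lemma cutWt_nonneg (ep : F → V × V) {w : F → ℝ} (hw : ∀ g, 0 ≤ w g) (X S : Finset V) :
    0 ≤ cutWt ep w X S := by
  refine Finset.sum_nonneg fun g _ => ?_
  split <;> simp [hw g]

lemma cutWt_mono (ep : F → V × V) {w w' : F → ℝ} (h : ∀ g, w g ≤ w' g) (X S : Finset V) :
    cutWt ep w X S ≤ cutWt ep w' X S := by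
  refine Finset.sum_le_sum fun g _ => ?_
  split
  · exact h g
  · exact le_refl 0

/-- Updating the weight of `f` adds `δ` to each cut weight where `f` participates. -/
lemma cutWt_update [DecidableEq F] (ep : F → V × V) (w : F → ℝ) (f : F) (δ : ℝ)
    (X S : Finset V) :
    cutWt ep (Function.update w f (w f + δ)) X S =
      cutWt ep w X S +
        (if (ep f).1 ∈ X ∧ (ep f).2 ∈ X ∧ crossesCut ep S f then δ else 0) := by
  unfold cutWt
  have key : ∀ g : F,
      (if (ep g).1 ∈ X ∧ (ep g).2 ∈ X ∧ crossesCut ep S g then Function.update w f (w f + δ) g else 0)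
        = (if (ep g).1 ∈ X ∧ (ep g).2 ∈ X ∧ crossesCut ep S g then w g else 0)
          + (if g = f then (if (ep f).1 ∈ X ∧ (ep f).2 ∈ X ∧ crossesCut ep S f then δ else 0) else 0) := by
    intro g
    by_cases hg : g = f
    · subst hg
      rw [Function.update_self, if_pos rfl]
      split <;> simp
    · rw [Function.update_of_ne hg, if_neg hg, add_zero]
  rw [Finset.sum_congr rfl fun g _ => key g, Finset.sum_add_distrib,
    Finset.sum_ite_eq' Finset.univ f
      (fun _ => if (ep f).1 ∈ X ∧ (ep f).2 ∈ X ∧ crossesCut ep S f then δ else 0),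
    if_pos (Finset.mem_univ f)]

lemma cutSet_mem_nonneg (ep : F → V × V) {w : F → ℝ} (hw : ∀ g, 0 ≤ w g) (X : Finset V) :
    ∀ c ∈ cutSet ep w X, 0 ≤ c := by
  rintro c ⟨S, _, _, _, rfl⟩; exact cutWt_nonneg ep hw X S

lemma minCutIn_nonneg (ep : F → V × V) {w : F → ℝ} (hw : ∀ g, 0 ≤ w g) (X : Finset V) :
    0 ≤ minCutIn ep w X :=
  Real.sInf_nonneg (cutSet_mem_nonneg ep hw X)

lemma strength_nonneg (ep : F → V × V) {w : F → ℝ} (hw : ∀ g, 0 ≤ w g) (f : F) :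
    0 ≤ strength ep w f := by
  obtain ⟨X, _, _, hX⟩ := strength_mem ep w f
  rw [hX]; exact minCutIn_nonneg ep hw X

/-- Nonemptiness of the cut set when `X` has two distinct elements. -/
lemma cutSet_nonempty (ep : F → V × V) (w : F → ℝ) {X : Finset V} {u v : V}
    (hu : u ∈ X) (hv : v ∈ X) (huv : u ≠ v) : (cutSet ep w X).Nonempty := by
  refine ⟨cutWt ep w X {u}, {u}, by simpa using hu, ⟨u, mem_singleton_self u⟩, ?_, rfl⟩
  intro h
  rw [← h] at hv
  exact huv (mem_singleton.mp hv).symm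

lemma minCutIn_le_cutWt (ep : F → V × V) (w : F → ℝ) {X S : Finset V}
    (hSX : S ⊆ X) (hSne : S.Nonempty) (hSX' : S ≠ X) :
    minCutIn ep w X ≤ cutWt ep w X S :=
  csInf_le (cutSet_finite ep w X).bddBelow ⟨S, hSX, hSne, hSX', rfl⟩

lemma minCutIn_mono (ep : F → V × V) {w w' : F → ℝ} (hw : ∀ g, 0 ≤ w g)
    (h : ∀ g, w g ≤ w' g) (X : Finset V) :
    minCutIn ep w X ≤ minCutIn ep w' X := by
  rcases (cutSet ep w' X).eq_empty_or_nonempty with he | hne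
  · have he' : cutSet ep w X = ∅ := by
      rw [Set.eq_empty_iff_forall_notMem] at he ⊢
      rintro c ⟨S, h1, h2, h3, rfl⟩
      exact he (cutWt ep w' X S) ⟨S, h1, h2, h3, rfl⟩
    rw [minCutIn_def, minCutIn_def, he, he']
  · refine le_csInf hne ?_
    rintro c ⟨S, h1, h2, h3, rfl⟩
    exact le_trans (minCutIn_le_cutWt ep w h1 h2 h3) (cutWt_mono ep h X S)

lemma minCutIn_update_le [DecidableEq F] (ep : F → V × V) (w : F → ℝ) (f : F) {δ : ℝ}
    (hδ : 0 ≤ δ) (X : Finset V) :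
    minCutIn ep (Function.update w f (w f + δ)) X ≤ minCutIn ep w X + δ := by
  rcases (cutSet ep w X).eq_empty_or_nonempty with he | hne
  · have he' : cutSet ep (Function.update w f (w f + δ)) X = ∅ := by
      rw [Set.eq_empty_iff_forall_notMem] at he ⊢
      rintro c ⟨S, h1, h2, h3, rfl⟩
      exact he (cutWt ep w X S) ⟨S, h1, h2, h3, rfl⟩
    rw [minCutIn_def, minCutIn_def, he, he', Real.sInf_empty]
    linarith
  · obtain ⟨S, h1, h2, h3, hS⟩ := hne.csInf_mem (cutSet_finite ep w X)
    calc minCutIn ep (Function.update w f (w f + δ)) X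
        ≤ cutWt ep (Function.update w f (w f + δ)) X S := minCutIn_le_cutWt ep _ h1 h2 h3
      _ ≤ cutWt ep w X S + δ := by rw [cutWt_update]; split <;> linarith
      _ = minCutIn ep w X + δ := by rw [minCutIn_def, hS]

/-- If `f` is not an edge of `G[X]`, updating its weight does not change `minCutIn`. -/
lemma minCutIn_update_of_not [DecidableEq F] (ep : F → V × V) (w : F → ℝ) (f : F) (δ : ℝ)
    {X : Finset V} (h : ¬((ep f).1 ∈ X ∧ (ep f).2 ∈ X)) :
    minCutIn ep (Function.update w f (w f + δ)) X = minCutIn ep w X := by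
  have : ∀ S : Finset V, cutWt ep (Function.update w f (w f + δ)) X S = cutWt ep w X S := by
    intro S
    rw [cutWt_update]
    rw [if_neg, add_zero]
    rintro ⟨h1, h2, _⟩
    exact h ⟨h1, h2⟩
  rw [minCutIn_def, minCutIn_def]
  congr 1
  ext c
  constructor
  · rintro ⟨S, h1, h2, h3, rfl⟩; exact ⟨S, h1, h2, h3, this S⟩
  · rintro ⟨S, h1, h2, h3, rfl⟩; exact ⟨S, h1, h2, h3, (this S).symm⟩

/-- Every cut weight is a natural multiple of `δ`. -/
lemma cutWt_mul (ep : F → V × V) {w : F → ℝ} {δ : ℝ}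
    (hmul : ∀ g : F, ∃ m : ℕ, w g = (m : ℝ) * δ) (X S : Finset V) :
    ∃ m : ℕ, cutWt ep w X S = (m : ℝ) * δ := by
  choose m hm using hmul
  refine ⟨∑ g : F, if (ep g).1 ∈ X ∧ (ep g).2 ∈ X ∧ crossesCut ep S g then m g else 0, ?_⟩
  unfold cutWt
  rw [Nat.cast_sum, Finset.sum_mul]
  refine Finset.sum_congr rfl fun g _ => ?_
  split
  · exact hm g
  · simp

lemma minCutIn_mul (ep : F → V × V) {w : F → ℝ} {δ : ℝ}
    (hmul : ∀ g : F, ∃ m : ℕ, w g = (m : ℝ) * δ) (X : Finset V) :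
    ∃ m : ℕ, minCutIn ep w X = (m : ℝ) * δ := by
  rcases (cutSet ep w X).eq_empty_or_nonempty with he | hne
  · exact ⟨0, by rw [minCutIn_def, he, Real.sInf_empty]; simp⟩
  · obtain ⟨S, _, _, _, hS⟩ := hne.csInf_mem (cutSet_finite ep w X)
    rw [minCutIn_def, hS]
    exact cutWt_mul ep hmul X S

lemma strength_mul (ep : F → V × V) {w : F → ℝ} {δ : ℝ}
    (hmul : ∀ g : F, ∃ m : ℕ, w g = (m : ℝ) * δ) (f : F) :
    ∃ m : ℕ, strength ep w f = (m : ℝ) * δ := by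
  obtain ⟨X, _, _, hX⟩ := strength_mem ep w f
  rw [hX]
  exact minCutIn_mul ep hmul X

lemma strength_mono (ep : F → V × V) {w w' : F → ℝ} (hw : ∀ g, 0 ≤ w g)
    (h : ∀ g, w g ≤ w' g) (f : F) :
    strength ep w f ≤ strength ep w' f := by
  refine csSup_le (strSet_nonempty ep w f) ?_
  rintro c ⟨X, h1, h2, rfl⟩
  exact le_trans (minCutIn_mono ep hw h X) (minCutIn_le_strength ep w' f h1 h2)

lemma strength_update_le [DecidableEq F] (ep : F → V × V) (w : F → ℝ) (f : F) {δ : ℝ}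
    (hδ : 0 ≤ δ) (f' : F) :
    strength ep (Function.update w f (w f + δ)) f' ≤ strength ep w f' + δ := by
  refine csSup_le (strSet_nonempty ep _ f') ?_
  rintro c ⟨X, h1, h2, rfl⟩
  calc minCutIn ep (Function.update w f (w f + δ)) X ≤ minCutIn ep w X + δ :=
        minCutIn_update_le ep w f hδ X
    _ ≤ strength ep w f' + δ := by
        have := minCutIn_le_strength ep w f' h1 h2; linarith

/-- Restriction of a cut of a superset: the cut `S ∩ X` of `G[X]` weighs at most `S` in `G[Z]`. -/
lemma cutWt_inter_le (ep : F → V × V) {w : F → ℝ} (hw : ∀ g, 0 ≤ w g)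
    {X Z : Finset V} (hXZ : X ⊆ Z) (S : Finset V) :
    cutWt ep w X (S ∩ X) ≤ cutWt ep w Z S := by
  refine Finset.sum_le_sum fun g _ => ?_
  by_cases h : (ep g).1 ∈ X ∧ (ep g).2 ∈ X ∧ crossesCut ep (S ∩ X) g
  · obtain ⟨h1, h2, h3⟩ := h
    have h3' : crossesCut ep S g := by
      unfold crossesCut at h3 ⊢
      simp only [Finset.mem_inter] at h3
      tauto
    rw [if_pos ⟨h1, h2, h3⟩, if_pos ⟨hXZ h1, hXZ h2, h3'⟩]
  · rw [if_neg h]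
    split
    · exact hw g
    · exact le_refl 0

/-- A cut of `X ∪ Y` separates `X` or separates `Y`, provided `X ∩ Y ≠ ∅`. -/
lemma cut_separates {X Y S : Finset V} {v : V} (hvX : v ∈ X) (hvY : v ∈ Y)
    (hS : S ⊆ X ∪ Y) (hSne : S.Nonempty) (hSne' : S ≠ X ∪ Y) :
    ((S ∩ X).Nonempty ∧ S ∩ X ≠ X) ∨ ((S ∩ Y).Nonempty ∧ S ∩ Y ≠ Y) := by
  by_cases hv : v ∈ S
  · by_cases hX : S ∩ X = X
    · by_cases hY : S ∩ Y = Y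
      · exfalso
        apply hSne'
        apply Finset.Subset.antisymm hS
        intro u hu
        rcases Finset.mem_union.mp hu with h | h
        · exact Finset.mem_of_mem_inter_left (hX ▸ h)
        · exact Finset.mem_of_mem_inter_left (hY ▸ h)
      · exact Or.inr ⟨⟨v, Finset.mem_inter.mpr ⟨hv, hvY⟩⟩, hY⟩
    · exact Or.inl ⟨⟨v, Finset.mem_inter.mpr ⟨hv, hvX⟩⟩, hX⟩
  · rcases (S ∩ X).eq_empty_or_nonempty with hX | hX
    · obtain ⟨u, hu⟩ := hSne
      have huY : u ∈ S ∩ Y := by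
        rcases Finset.mem_union.mp (hS hu) with h | h
        · exact absurd (Finset.mem_inter.mpr ⟨hu, h⟩) (by simp [hX])
        · exact Finset.mem_inter.mpr ⟨hu, h⟩
      refine Or.inr ⟨⟨u, huY⟩, ?_⟩
      intro h
      have : v ∈ S ∩ Y := by rw [h]; exact hvY
      exact hv (Finset.mem_of_mem_inter_left this)
    · refine Or.inl ⟨hX, ?_⟩
      intro h
      have : v ∈ S ∩ X := by rw [h]; exact hvX
      exact hv (Finset.mem_of_mem_inter_left this)

end Stmt7

/-- If every weight is an integer multiple of `δ > 0` and the weight of the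
edge `f` is increased by `δ`, then any edge `f'` whose strength changes must have the same
strength as `f` both before and after the weight change. -/
theorem stmt7 {V F : Type} [Fintype V] [Fintype F] [DecidableEq F]
    (ep : F → V × V) (hep : ∀ f, (ep f).1 ≠ (ep f).2)
    (w : F → ℝ) (hw : ∀ f, 0 ≤ w f)
    (δ : ℝ) (hδ : 0 < δ) (hmul : ∀ g : F, ∃ m : ℕ, w g = (m : ℝ) * δ)
    (f : F) (w' : F → ℝ) (hw' : w' = Function.update w f (w f + δ)) :
    ∀ f' : F, strength ep w' f' ≠ strength ep w f' →
      strength ep w f' = strength ep w f ∧ strength ep w' f' = strength ep w' f := by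
  subst hw'
  intro f' hne
  set w' := Function.update w f (w f + δ) with hw'def
  -- basic facts about the updated weight function
  have hle : ∀ g, w g ≤ w' g := by
    intro g
    rcases eq_or_ne g f with h | h
    · subst h; rw [hw'def, Function.update_self]; linarith
    · rw [hw'def, Function.update_of_ne h]
  have hw'0 : ∀ g, 0 ≤ w' g := fun g => le_trans (hw g) (hle g)
  have hmul' : ∀ g : F, ∃ m : ℕ, w' g = (m : ℝ) * δ := by
    intro g
    rcases eq_or_ne g f with h | h
    · subst h
      obtain ⟨m, hm⟩ := hmul g
      exact ⟨m + 1, by rw [hw'def, Function.update_self]; push_cast; linarith⟩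
    · rw [hw'def, Function.update_of_ne h]; exact hmul g
  set a := strength ep w f' with ha_def
  set a' := strength ep w' f' with ha'_def
  have ha_le : a ≤ a' := Stmt7.strength_mono ep hw hle f'
  have hlt : a < a' := lt_of_le_of_ne ha_le (Ne.symm hne)
  have ha'_le : a' ≤ a + δ := Stmt7.strength_update_le ep w f (le_of_lt hδ) f'
  -- since strengths are multiples of δ, the strength of f' increases by exactly δ
  have haδ : a' = a + δ := by
    obtain ⟨m, hm⟩ := Stmt7.strength_mul ep hmul f'
    obtain ⟨m', hm'⟩ := Stmt7.strength_mul ep hmul' f'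
    rw [← ha_def] at hm
    rw [← ha'_def] at hm'
    refine le_antisymm ha'_le ?_
    have hmm : (m : ℝ) < m' := by
      have := hlt
      rw [hm, hm'] at this
      exact lt_of_mul_lt_mul_right this (le_of_lt hδ)
    have hmm' : m + 1 ≤ m' := by exact_mod_cast Nat.succ_le_of_lt (by exact_mod_cast hmm)
    have : ((m : ℝ) + 1) * δ ≤ (m' : ℝ) * δ := by
      have : ((m : ℝ) + 1) ≤ (m' : ℝ) := by exact_mod_cast hmm'
      nlinarith
    rw [hm, hm']
    nlinarith
  -- a witness X attaining the new strength of f'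
  obtain ⟨X, hX1, hX2, hXa⟩ := Stmt7.strength_mem ep w' f'
  rw [← ha'_def] at hXa
  have hXw : minCutIn ep w X ≤ a := Stmt7.minCutIn_le_strength ep w f' hX1 hX2
  -- both endpoints of f lie in X
  have hfX : (ep f).1 ∈ X ∧ (ep f).2 ∈ X := by
    by_contra h
    have := Stmt7.minCutIn_update_of_not ep w f δ h
    rw [← hw'def, ← hXa] at this
    linarith
  -- the old min-cut of X equals a
  have hXeq : minCutIn ep w X = a := by
    have h1 : minCutIn ep w' X ≤ minCutIn ep w X + δ := by
      rw [hw'def]; exact Stmt7.minCutIn_update_le ep w f (le_of_lt hδ) X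
    rw [← hXa] at h1
    linarith
  have hkf_ge : a ≤ strength ep w f := by
    have := Stmt7.minCutIn_le_strength ep w f hfX.1 hfX.2
    linarith [hXeq]
  -- upper bound: strength of f (old) is at most a
  have hkf : strength ep w f = a := by
    refine le_antisymm ?_ hkf_ge
    by_contra h
    push_neg at h
    obtain ⟨Y, hY1, hY2, hYk⟩ := Stmt7.strength_mem ep w f
    have hYgt : a < minCutIn ep w Y := by rw [← hYk]; exact h
    set Z := X ∪ Y with hZ_def
    have hXZ : X ⊆ Z := Finset.subset_union_left
    have hYZ : Y ⊆ Z := Finset.subset_union_right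
    set b := min a' (minCutIn ep w Y) with hb_def
    have hbgt : a < b := lt_min hlt hYgt
    -- every cut of Z = X ∪ Y has old weight at least b
    have key : ∀ S : Finset V, S ⊆ Z → S.Nonempty → S ≠ Z → b ≤ cutWt ep w Z S := by
      intro S hSZ hSne hSne'
      by_cases hcross : crossesCut ep S f
      · -- the updated edge crosses S; since its endpoints are in Y, S separates Y
        have hsep : (S ∩ Y).Nonempty ∧ S ∩ Y ≠ Y := by
          rcases hcross with ⟨h1, h2⟩ | ⟨h1, h2⟩
          · refine ⟨⟨(ep f).1, Finset.mem_inter.mpr ⟨h1, hY1⟩⟩, fun hEq => ?_⟩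
            have : (ep f).2 ∈ S ∩ Y := by rw [hEq]; exact hY2
            exact h2 (Finset.mem_of_mem_inter_left this)
          · refine ⟨⟨(ep f).2, Finset.mem_inter.mpr ⟨h2, hY2⟩⟩, fun hEq => ?_⟩
            have : (ep f).1 ∈ S ∩ Y := by rw [hEq]; exact hY1
            exact h1 (Finset.mem_of_mem_inter_left this)
        calc b ≤ minCutIn ep w Y := min_le_right _ _
          _ ≤ cutWt ep w Y (S ∩ Y) :=
              Stmt7.minCutIn_le_cutWt ep w Finset.inter_subset_right hsep.1 hsep.2
          _ ≤ cutWt ep w Z S := Stmt7.cutWt_inter_le ep hw hYZ S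
      · -- the updated edge does not cross S, so old and new cut weights agree
        have heq : cutWt ep w Z S = cutWt ep w' Z S := by
          rw [hw'def, Stmt7.cutWt_update, if_neg, add_zero]
          rintro ⟨_, _, hc⟩
          exact hcross hc
        rcases Stmt7.cut_separates hfX.1 hY1 hSZ hSne hSne' with ⟨h1, h2⟩ | ⟨h1, h2⟩
        · calc b ≤ a' := min_le_left _ _
            _ = minCutIn ep w' X := hXa
            _ ≤ cutWt ep w' X (S ∩ X) :=
                Stmt7.minCutIn_le_cutWt ep w' Finset.inter_subset_right h1 h2
            _ ≤ cutWt ep w' Z S := Stmt7.cutWt_inter_le ep hw'0 hXZ S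
            _ = cutWt ep w Z S := heq.symm
        · calc b ≤ minCutIn ep w Y := min_le_right _ _
            _ ≤ minCutIn ep w' Y := Stmt7.minCutIn_mono ep hw hle Y
            _ ≤ cutWt ep w' Y (S ∩ Y) :=
                Stmt7.minCutIn_le_cutWt ep w' Finset.inter_subset_right h1 h2
            _ ≤ cutWt ep w' Z S := Stmt7.cutWt_inter_le ep hw'0 hYZ S
            _ = cutWt ep w Z S := heq.symm
    have hZne : (Stmt7.cutSet ep w Z).Nonempty :=
      Stmt7.cutSet_nonempty ep w (hXZ hX1) (hXZ hX2) (hep f')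
    have hbZ : b ≤ minCutIn ep w Z := by
      refine le_csInf hZne ?_
      rintro c ⟨S, h1, h2, h3, rfl⟩
      exact key S h1 h2 h3
    have : minCutIn ep w Z ≤ a := Stmt7.minCutIn_le_strength ep w f' (hXZ hX1) (hXZ hX2)
    linarith
  refine ⟨hkf.symm, ?_⟩
  -- now the new strength of f equals a'
  have hkf'_ge : a' ≤ strength ep w' f := by
    have := Stmt7.minCutIn_le_strength ep w' f hfX.1 hfX.2
    rw [← hXa] at this
    exact this
  refine le_antisymm hkf'_ge ?_
  by_contra h
  push_neg at h
  obtain ⟨Y, hY1, hY2, hYk⟩ := Stmt7.strength_mem ep w' f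
  have hYgt : a' < minCutIn ep w' Y := by rw [← hYk]; exact h
  have h1 : minCutIn ep w' Y ≤ minCutIn ep w Y + δ := by
    rw [hw'def]; exact Stmt7.minCutIn_update_le ep w f (le_of_lt hδ) Y
  have h2 : minCutIn ep w Y ≤ strength ep w f := Stmt7.minCutIn_le_strength ep w f hY1 hY2
  rw [hkf] at h2
  linarith
end

section
/- Let w^F be a weight assignment of an unweighted multi-hypergraph H = (V, E) (every hyperedge of size at least 2) satisfying Σ_{f ∈ F_e} w^F(f) = 1 for every e ∈ E, and suppose κ_e > 0 for every e ∈ E. Let ρ > 0 be a real parameter. Then for every integer i ≥ 0 and every cut ∅ ⊊ S ⊊ V: Σ_{e ∈ E_{≥i}^max ∩ δ_H(S)} w_i^E(e) ≥ Σ_{f ∈ F_{≥i}, f crossing S} w_i^F(f). -/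
open Finset
open scoped Classical

/-- Suppose the weight assignment `w` satisfies `Σ_{f ∈ F_e} w(f) = 1` for
every hyperedge `e` and `κ_e > 0` for every `e`, and let `ρ > 0`.  Here `e ∈ E_{≥i}^max` iff
`κ_e^max ≥ ρ·2^i`; `f ∈ F_{≥i}` iff `w(f) > 0` and `k_f ≥ ρ·2^i`; for `ρ·2^j ≤ κ_e < ρ·2^{j+1}`
we have `w_i^E(e) = 2^{i−j}` and for `ρ·2^j ≤ k_f < ρ·2^{j+1}` we have
`w_i^F(f) = w(f)·2^{i−j}`, formalized via `Int.log 2`.  Then for every `i ≥ 0` and every cut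
`S`, the `w_i^E`-weight of the hyperedges of `E_{≥i}^max` crossing `S` is at least the
`w_i^F`-weight of the edges of `F_{≥i}` crossing `S`. -/
theorem stmt11 {V E : Type} [Fintype V] [LinearOrder V] [Fintype E]
    (he : E → Finset V) (hhe : ∀ e, 2 ≤ (he e).card)
    (w : CliqueEdges he → ℝ) (hw : ∀ f, 0 ≤ w f)
    (hsum : ∀ e : E, (∑ f : CliqueEdges he, if f.1.1 = e then w f else 0) = 1)
    (hκ : ∀ e : E, 0 < kappa he w e)
    (ρ : ℝ) (hρ : 0 < ρ) (i : ℕ)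
    (S : Finset V) (hS : S.Nonempty) (hS' : S ≠ Finset.univ) :
    (∑ f : CliqueEdges he,
        if 0 < w f ∧ ρ * 2 ^ i ≤ strength (cep he) w f ∧ crossesCut (cep he) S f
          then w f * (2 : ℝ) ^ ((i : ℤ) - Int.log 2 (strength (cep he) w f / ρ)) else 0)
      ≤ ∑ e : E, if hCrosses he S e ∧ ρ * 2 ^ i ≤ kappaMax he w e
          then (2 : ℝ) ^ ((i : ℤ) - Int.log 2 (kappa he w e / ρ)) else 0 := by
  classical
  rw [← Finset.sum_fiberwise Finset.univ (fun f : CliqueEdges he => f.1.1)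
      (fun f => if 0 < w f ∧ ρ * 2 ^ i ≤ strength (cep he) w f ∧ crossesCut (cep he) S f
          then w f * (2 : ℝ) ^ ((i : ℤ) - Int.log 2 (strength (cep he) w f / ρ)) else 0)]
  apply Finset.sum_le_sum
  intro e _
  set C : ℝ := (2 : ℝ) ^ ((i : ℤ) - Int.log 2 (kappa he w e / ρ)) with hC
  have hCpos : 0 < C := zpow_pos (by norm_num) _
  have hbddB : BddBelow {c : ℝ | ∃ f : CliqueEdges he, f.1.1 = e ∧ c = strength (cep he) w f} := by
    refine BddBelow.mono ?_ (Set.finite_range (strength (cep he) w)).bddBelow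
    rintro c ⟨f, -, rfl⟩; exact ⟨f, rfl⟩
  have hbddA : BddAbove {c : ℝ | ∃ f : CliqueEdges he,
      f.1.1 = e ∧ 0 < w f ∧ c = strength (cep he) w f} := by
    refine BddAbove.mono ?_ (Set.finite_range (strength (cep he) w)).bddAbove
    rintro c ⟨f, -, -, rfl⟩; exact ⟨f, rfl⟩
  by_cases hex : ∃ f : CliqueEdges he, f.1.1 = e ∧
      (0 < w f ∧ ρ * 2 ^ i ≤ strength (cep he) w f ∧ crossesCut (cep he) S f)
  · obtain ⟨f0, hf0e, hpos0, hstr0, hcr0⟩ := hex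
    have hcond : hCrosses he S e ∧ ρ * 2 ^ i ≤ kappaMax he w e := by
      constructor
      · have h1 : f0.1.2.1 ∈ he e := hf0e ▸ f0.2.1
        have h2 : f0.1.2.2 ∈ he e := hf0e ▸ f0.2.2.1
        rcases hcr0 with ⟨ha, hb⟩ | ⟨ha, hb⟩ <;> simp only [cep] at ha hb
        · exact ⟨⟨f0.1.2.1, by simp [Finset.mem_inter, h1, ha]⟩,
            ⟨f0.1.2.2, by simp [Finset.mem_sdiff, h2, hb]⟩⟩
        · exact ⟨⟨f0.1.2.2, by simp [Finset.mem_inter, h2, hb]⟩,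
            ⟨f0.1.2.1, by simp [Finset.mem_sdiff, h1, ha]⟩⟩
      · exact hstr0.trans (le_csSup hbddA ⟨f0, hf0e, hpos0, rfl⟩)
    rw [if_pos hcond]
    calc (∑ f ∈ Finset.univ.filter (fun f : CliqueEdges he => f.1.1 = e),
          if 0 < w f ∧ ρ * 2 ^ i ≤ strength (cep he) w f ∧ crossesCut (cep he) S f
            then w f * (2 : ℝ) ^ ((i : ℤ) - Int.log 2 (strength (cep he) w f / ρ)) else 0)
        ≤ ∑ f ∈ Finset.univ.filter (fun f : CliqueEdges he => f.1.1 = e), w f * C := by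
          apply Finset.sum_le_sum
          intro f hf
          have hfe : f.1.1 = e := (Finset.mem_filter.1 hf).2
          split_ifs with hP
          · have hk : kappa he w e ≤ strength (cep he) w f := csInf_le hbddB ⟨f, hfe, rfl⟩
            have hlog : Int.log 2 (kappa he w e / ρ) ≤ Int.log 2 (strength (cep he) w f / ρ) :=
              Int.log_mono_right (div_pos (hκ e) hρ) (by gcongr)
            have hzp : (2 : ℝ) ^ ((i : ℤ) - Int.log 2 (strength (cep he) w f / ρ)) ≤ C :=
              zpow_le_zpow_right₀ one_le_two (sub_le_sub_left hlog _)
            exact mul_le_mul_of_nonneg_left hzp (hw f)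
          · exact mul_nonneg (hw f) hCpos.le
      _ = (∑ f ∈ Finset.univ.filter (fun f : CliqueEdges he => f.1.1 = e), w f) * C := by
          rw [Finset.sum_mul]
      _ = 1 * C := by rw [Finset.sum_filter, hsum e]
      _ = C := one_mul C
  · have hzero : (∑ f ∈ Finset.univ.filter (fun f : CliqueEdges he => f.1.1 = e),
        if 0 < w f ∧ ρ * 2 ^ i ≤ strength (cep he) w f ∧ crossesCut (cep he) S f
          then w f * (2 : ℝ) ^ ((i : ℤ) - Int.log 2 (strength (cep he) w f / ρ)) else 0) = 0 := by
      apply Finset.sum_eq_zero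
      intro f hf
      rw [if_neg]
      intro hP
      exact hex ⟨f, (Finset.mem_filter.1 hf).2, hP⟩
    rw [hzero]
    split_ifs with h
    · exact hCpos.le
    · exact le_refl 0
end

section
/- Let w^F be a weight assignment of an unweighted multi-hypergraph H = (V, E) (every hyperedge of size at least 2) and let ρ > 0 be a real parameter. Fix an integer i ≥ 0 and let A_G be a connected component of G_{≥i} = (V, F_{≥i}, w_i^F) with at least 2 vertices. Then the min-cut of A_G, computed with respect to the modified weights w_i^F, is at least ρ·2^i. -/
open Finset
open scoped Classical

lemma aux_minCutIn_le_cutWt {V F : Type} [Fintype V] [Fintype F] (ep : F → V × V) (w : F → ℝ)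
    {X S : Finset V} (hS : S ⊆ X) (hne : S.Nonempty) (hSX : S ≠ X) :
    minCutIn ep w X ≤ cutWt ep w X S := by
  apply csInf_le
  · apply Set.Finite.bddBelow
    apply Set.Finite.subset (Set.finite_range (cutWt ep w X))
    rintro c ⟨S', -, -, -, rfl⟩; exact ⟨S', rfl⟩
  · exact ⟨S, hS, hne, hSX, rfl⟩

lemma aux_minCutIn_le_strength {V F : Type} [Fintype V] [Fintype F] (ep : F → V × V) (w : F → ℝ)
    {X : Finset V} {f : F} (h1 : (ep f).1 ∈ X) (h2 : (ep f).2 ∈ X) :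
    minCutIn ep w X ≤ strength ep w f := by
  apply le_csSup
  · apply Set.Finite.bddAbove
    apply Set.Finite.subset (Set.finite_range (minCutIn ep w))
    rintro c ⟨X', -, -, rfl⟩; exact ⟨X', rfl⟩
  · exact ⟨X, h1, h2, rfl⟩

lemma aux_strength_attained {V F : Type} [Fintype V] [Fintype F] (ep : F → V × V) (w : F → ℝ)
    (f : F) :
    ∃ X : Finset V, (ep f).1 ∈ X ∧ (ep f).2 ∈ X ∧ strength ep w f = minCutIn ep w X := by
  have hfin : {c : ℝ | ∃ X : Finset V,
      (ep f).1 ∈ X ∧ (ep f).2 ∈ X ∧ c = minCutIn ep w X}.Finite := by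
    apply Set.Finite.subset (Set.finite_range (minCutIn ep w))
    rintro c ⟨X', -, -, rfl⟩; exact ⟨X', rfl⟩
  have hne : {c : ℝ | ∃ X : Finset V,
      (ep f).1 ∈ X ∧ (ep f).2 ∈ X ∧ c = minCutIn ep w X}.Nonempty :=
    ⟨minCutIn ep w Finset.univ, Finset.univ, Finset.mem_univ _, Finset.mem_univ _, rfl⟩
  obtain ⟨X, h1, h2, hc⟩ := hne.csSup_mem hfin
  exact ⟨X, h1, h2, hc⟩

/-- Let `ρ > 0`, `i ≥ 0`, and let `G_{≥i}` be the graph on `V` whose edges are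
the positive-weight clique edges `f` with strength `k_f ≥ ρ·2^i`, carrying the modified weights
`w_i^F(f) = w(f)·2^{i−j}` where `ρ·2^j ≤ k_f < ρ·2^{j+1}` (formalized via `j = Int.log 2 (k_f/ρ)`).
If `A` is the vertex set of a connected component of `G_{≥i}` with at least 2 vertices, then
every cut `(S, A∖S)` of `A` has `w_i^F`-weight at least `ρ·2^i`; that is, the min-cut of the
component with respect to the modified weights is at least `ρ·2^i`. -/
theorem stmt13 {V E : Type} [Fintype V] [LinearOrder V] [Fintype E]
    (he : E → Finset V) (hhe : ∀ e, 2 ≤ (he e).card)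
    (w : CliqueEdges he → ℝ) (hw : ∀ f, 0 ≤ w f)
    (ρ : ℝ) (hρ : 0 < ρ) (i : ℕ)
    (A : Finset V)
    (hA : ∃ v₀ : V, ∀ u : V, u ∈ A ↔
      (SimpleGraph.fromRel (fun a b => ∃ f : CliqueEdges he,
        0 < w f ∧ ρ * 2 ^ i ≤ strength (cep he) w f ∧ cep he f = (a, b))).Reachable v₀ u)
    (hA2 : 2 ≤ A.card) :
    ∀ S : Finset V, S ⊆ A → S.Nonempty → S ≠ A →
      ρ * 2 ^ i ≤ ∑ f : CliqueEdges he,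
        if 0 < w f ∧ ρ * 2 ^ i ≤ strength (cep he) w f ∧
            (cep he f).1 ∈ A ∧ (cep he f).2 ∈ A ∧ crossesCut (cep he) S f
          then w f * (2 : ℝ) ^ ((i : ℤ) - Int.log 2 (strength (cep he) w f / ρ)) else 0 := by
  intro S hSA hSne hSneA
  obtain ⟨v₀, hv₀⟩ := hA
  set G := SimpleGraph.fromRel (fun a b => ∃ f : CliqueEdges he,
      0 < w f ∧ ρ * 2 ^ i ≤ strength (cep he) w f ∧ cep he f = (a, b)) with hGdef
  have hρi : (0:ℝ) < ρ * 2 ^ i := by positivity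
  -- adjacency preserves membership in A
  have hadjA : ∀ {a b : V}, a ∈ A → G.Adj a b → b ∈ A := by
    intro a b ha hab
    exact (hv₀ b).2 (((hv₀ a).1 ha).trans hab.reachable)
  -- there is an edge of G_{≥i} crossing S
  obtain ⟨u, hu⟩ := hSne
  obtain ⟨u', hu'A, hu'S⟩ : ∃ u', u' ∈ A ∧ u' ∉ S := by
    by_contra h
    push_neg at h
    exact hSneA (Finset.Subset.antisymm hSA fun x hx => h x hx)
  have hreach : G.Reachable u u' := ((hv₀ u).1 (hSA hu)).symm.trans ((hv₀ u').1 hu'A)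
  obtain ⟨p⟩ := hreach
  obtain ⟨d, -, hdfst, hdsnd⟩ := p.exists_boundary_dart (S : Set V) hu hu'S
  have hdS1 : d.toProd.1 ∈ S := hdfst
  have hdS2 : d.toProd.2 ∉ S := hdsnd
  have hadj := (SimpleGraph.fromRel_adj _ d.toProd.1 d.toProd.2).mp d.adj
  -- the set of crossing edges
  set C : Finset (CliqueEdges he) := Finset.univ.filter (fun f =>
    0 < w f ∧ ρ * 2 ^ i ≤ strength (cep he) w f ∧ crossesCut (cep he) S f) with hCdef
  have hCne : C.Nonempty := by
    rcases hadj.2 with ⟨f₀, hw₀, hs₀, hcep₀⟩ | ⟨f₀, hw₀, hs₀, hcep₀⟩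
    · exact ⟨f₀, Finset.mem_filter.2 ⟨Finset.mem_univ _, hw₀, hs₀,
        Or.inl ⟨by rw [hcep₀]; exact hdS1, by rw [hcep₀]; exact hdS2⟩⟩⟩
    · exact ⟨f₀, Finset.mem_filter.2 ⟨Finset.mem_univ _, hw₀, hs₀,
        Or.inr ⟨by rw [hcep₀]; exact hdS2, by rw [hcep₀]; exact hdS1⟩⟩⟩
  -- pick a crossing edge of maximum strength
  obtain ⟨fm, hfmC, hfmmax⟩ := C.exists_max_image (fun f => strength (cep he) w f) hCne
  rw [hCdef, Finset.mem_filter] at hfmC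
  obtain ⟨-, hfmw, hfms, hfmcross⟩ := hfmC
  set k : ℝ := strength (cep he) w fm with hkdef
  have hk0 : (0:ℝ) < k := lt_of_lt_of_le hρi hfms
  set j : ℤ := Int.log 2 (k / ρ) with hjdef
  have hjk : ρ * (2:ℝ) ^ j ≤ k := by
    have h2 : ((2:ℕ):ℝ) ^ j ≤ k / ρ :=
      Int.zpow_log_le_self (by norm_num) (div_pos hk0 hρ)
    push_cast at h2
    calc ρ * (2:ℝ) ^ j ≤ ρ * (k / ρ) := by
          exact mul_le_mul_of_nonneg_left h2 hρ.le
      _ = k := by field_simp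
  -- a set X attaining the strength of fm
  obtain ⟨X, hX1, hX2, hkX⟩ := aux_strength_attained (cep he) w fm
  set S' : Finset V := S ∩ X with hS'def
  have hS'sub : S' ⊆ X := Finset.inter_subset_right
  have hS'props : S'.Nonempty ∧ S' ≠ X := by
    rcases hfmcross with ⟨h1, h2⟩ | ⟨h1, h2⟩
    · refine ⟨⟨(cep he fm).1, Finset.mem_inter.2 ⟨h1, hX1⟩⟩, ?_⟩
      intro hEq
      exact h2 (Finset.mem_inter.1 (hEq ▸ hX2)).1
    · refine ⟨⟨(cep he fm).2, Finset.mem_inter.2 ⟨h2, hX2⟩⟩, ?_⟩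
      intro hEq
      exact h1 (Finset.mem_inter.1 (hEq ▸ hX1)).1
  have hcut : k ≤ cutWt (cep he) w X S' :=
    hkX.trans_le (aux_minCutIn_le_cutWt (cep he) w hS'sub hS'props.1 hS'props.2)
  -- every positive-weight edge of G[X] crossing S' has strength exactly k,
  -- crosses S, and has both endpoints in A
  have key : ∀ f : CliqueEdges he,
      (cep he f).1 ∈ X → (cep he f).2 ∈ X → crossesCut (cep he) S' f → 0 < w f →
      strength (cep he) w f = k ∧ crossesCut (cep he) S f ∧
        (cep he f).1 ∈ A ∧ (cep he f).2 ∈ A := by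
    intro f h1X h2X hcr hwf
    have hge : k ≤ strength (cep he) w f :=
      hkX.trans_le (aux_minCutIn_le_strength (cep he) w h1X h2X)
    have hcrS : crossesCut (cep he) S f := by
      rcases hcr with ⟨h1, h2⟩ | ⟨h1, h2⟩
      · exact Or.inl ⟨(Finset.mem_inter.1 h1).1,
          fun hs => h2 (Finset.mem_inter.2 ⟨hs, h2X⟩)⟩
      · exact Or.inr ⟨fun hs => h1 (Finset.mem_inter.2 ⟨hs, h1X⟩),
          (Finset.mem_inter.1 h2).1⟩
    have hfC : f ∈ C := Finset.mem_filter.2 ⟨Finset.mem_univ _, hwf, hfms.trans hge, hcrS⟩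
    have hle : strength (cep he) w f ≤ k := hfmmax f hfC
    have hsk : strength (cep he) w f = k := le_antisymm hle hge
    have hrel : ∃ f' : CliqueEdges he, 0 < w f' ∧ ρ * 2 ^ i ≤ strength (cep he) w f' ∧
        cep he f' = ((cep he f).1, (cep he f).2) :=
      ⟨f, hwf, hfms.trans hge, rfl⟩
    rcases hcrS with ⟨h1, h2⟩ | ⟨h1, h2⟩
    · have h1A : (cep he f).1 ∈ A := hSA h1
      have hne : (cep he f).1 ≠ (cep he f).2 := fun h => h2 (h ▸ h1)
      have hadj' : G.Adj (cep he f).1 (cep he f).2 := by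
        rw [hGdef, SimpleGraph.fromRel_adj]
        exact ⟨hne, Or.inl hrel⟩
      exact ⟨hsk, Or.inl ⟨h1, h2⟩, h1A, hadjA h1A hadj'⟩
    · have h2A : (cep he f).2 ∈ A := hSA h2
      have hne : (cep he f).2 ≠ (cep he f).1 := fun h => h1 (h ▸ h2)
      have hadj' : G.Adj (cep he f).2 (cep he f).1 := by
        rw [hGdef, SimpleGraph.fromRel_adj]
        exact ⟨hne, Or.inr hrel⟩
      exact ⟨hsk, Or.inr ⟨h1, h2⟩, hadjA h2A hadj', h2A⟩
  -- compare the target sum with the cut of G[X]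
  have hstep : (2:ℝ) ^ ((i:ℤ) - j) * cutWt (cep he) w X S' ≤ ∑ f : CliqueEdges he,
      if 0 < w f ∧ ρ * 2 ^ i ≤ strength (cep he) w f ∧
          (cep he f).1 ∈ A ∧ (cep he f).2 ∈ A ∧ crossesCut (cep he) S f
        then w f * (2 : ℝ) ^ ((i : ℤ) - Int.log 2 (strength (cep he) w f / ρ)) else 0 := by
    rw [cutWt, Finset.mul_sum]
    apply Finset.sum_le_sum
    intro f _
    by_cases hQ : (cep he f).1 ∈ X ∧ (cep he f).2 ∈ X ∧ crossesCut (cep he) S' f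
    · rw [if_pos hQ]
      by_cases hwf : 0 < w f
      · obtain ⟨hsk, hcrS, h1A, h2A⟩ := key f hQ.1 hQ.2.1 hQ.2.2 hwf
        rw [if_pos ⟨hwf, by rw [hsk]; exact hfms, h1A, h2A, hcrS⟩, hsk, ← hjdef]
        exact le_of_eq (mul_comm _ _)
      · have : w f = 0 := le_antisymm (not_lt.1 hwf) (hw f)
        rw [this, mul_zero]
        split <;> simp
    · rw [if_neg hQ, mul_zero]
      split
      · exact mul_nonneg (hw f) (by positivity)
      · exact le_refl 0
  have hfinal : ρ * 2 ^ i ≤ (2:ℝ) ^ ((i:ℤ) - j) * cutWt (cep he) w X S' := by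
    have h1 : (2:ℝ) ^ ((i:ℤ) - j) * (ρ * 2 ^ j) ≤ (2:ℝ) ^ ((i:ℤ) - j) * cutWt (cep he) w X S' :=
      mul_le_mul_of_nonneg_left (hjk.trans hcut) (by positivity)
    calc ρ * 2 ^ i = (2:ℝ) ^ ((i:ℤ) - j) * (ρ * 2 ^ j) := by
          rw [mul_comm ((2:ℝ) ^ ((i:ℤ) - j)) _, mul_assoc, ← zpow_add₀ (two_ne_zero),
            add_sub_cancel, zpow_natCast]
      _ ≤ _ := h1
  exact hfinal.trans hstep
end
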